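/- arXiv:2405.20394 — 9 statements merged into one kernel-verified Lean document; each statement's English description precedes it below -/
import Mathlib

section
/- Let m ≥ 3 be an integer that is either odd or congruent to 2 modulo 4. Then the stabilizer of Φ_m under the multiplication action of (ℤ/mℤ)^× on subsets of itself is trivial: if u ∈ (ℤ/mℤ)^× satisfies uΦ_m = Φ_m, then u = 1. -/
/-!
For odd `n`, doubling in `ZMod n` sends a least residue `v` to `2v` or `2v - n` according as
`2v < n` or not, that is, according to the parity of the result. So if `u` preserves the parity
of least residues, the defect `d x = val (u x) - val x` satisfies `d (2x) = 2 d x`; since `2` is a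
unit, every power of `2` divides `d`, and `|d| < n` forces `d = 0`, whence `u = 1`.

For odd `m`, `Φ_m = {x | val (2x) is even}`, so a `u` stabilising `Φ_m` preserves parity. For
`m = 2n` with `n` odd, reduction mod `n` is an isomorphism `(ZMod m)ˣ ≃ (ZMod n)ˣ` (a surjection
between groups of order `φ n`) which carries `Φ_m` onto the units of odd least residue.
-/

/-- For `m ≥ 3`, `Phi m ⊆ (ZMod m)ˣ` is the set of units whose least positive residue is at
most `⌊(m-1)/2⌋`; this is the CM type `Φ_m` of the largest simple isogeny factor of the
Jacobian of `y² = xᵐ + 1`. -/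
def Phi (m : ℕ) : Set (ZMod m)ˣ :=
  {a : (ZMod m)ˣ | ((a : ZMod m)).val ≤ (m - 1) / 2}

open Function

lemma Int.eq_zero_of_comp_eq_two_mul {α : Type*} {f : α → ℤ} {g : α → α}
    (hg : Surjective g) (hfg : ∀ x, f (g x) = 2 * f x) {N : ℕ} (hf : ∀ x, |f x| < 2 ^ N)
    (x : α) : f x = 0 := by
  have hdvd : ∀ k x, (2 : ℤ) ^ k ∣ f x := by
    intro k
    induction k with
    | zero => simp
    | succ k ih =>
      intro x
      obtain ⟨y, rfl⟩ := hg x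
      rw [hfg, pow_succ']
      exact mul_dvd_mul_left 2 (ih y)
  exact Int.eq_zero_of_abs_lt_dvd (hdvd N x) (hf x)

namespace ZMod

variable {n : ℕ}

lemma val_two_mul [NeZero n] (z : ZMod n) :
    (2 * z).val = if 2 * z.val < n then 2 * z.val else 2 * z.val - n := by
  rw [two_mul, two_mul]
  split_ifs with h
  · exact val_add_of_lt h
  · exact val_add_of_le (not_lt.mp h)

lemma even_val_two_mul_iff (hn : Odd n) (z : ZMod n) :
    Even (2 * z).val ↔ 2 * z.val < n := by
  have : NeZero n := ⟨hn.pos.ne'⟩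
  have hz := z.val_lt
  rw [val_two_mul, Nat.even_iff]
  obtain ⟨k, rfl⟩ := hn
  split_ifs <;> omega

theorem eq_one_of_forall_even_val_mul_iff (hn : Odd n) {u : (ZMod n)ˣ}
    (hu : ∀ y : (ZMod n)ˣ, Even (u * y : ZMod n).val ↔ Even (y : ZMod n).val) : u = 1 := by
  have : NeZero n := ⟨hn.pos.ne'⟩
  let two : (ZMod n)ˣ := unitOfCoprime 2 (Nat.coprime_two_left.mpr hn)
  let d : (ZMod n)ˣ → ℤ := fun x => (u * x : ZMod n).val - (x : ZMod n).val
  have hd : ∀ x, d (two * x) = 2 * d x := by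
    intro x
    have hparity := hu (two * x)
    simp only [two, Units.val_mul, coe_unitOfCoprime, Nat.cast_ofNat, mul_left_comm (u : ZMod n),
      even_val_two_mul_iff hn] at hparity
    simp only [d, two, Units.val_mul, coe_unitOfCoprime, Nat.cast_ofNat, mul_left_comm (u : ZMod n),
      val_two_mul]
    split_ifs <;> omega
  have hbound : ∀ x, |d x| < 2 ^ n := by
    intro x
    have hux := (u * x : ZMod n).val_lt
    have hx := (x : ZMod n).val_lt
    have hn_lt : (n : ℤ) < 2 ^ n := by exact_mod_cast Nat.lt_two_pow_self
    rw [abs_lt]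
    constructor <;> simp only [d] <;> omega
  have hd_one := Int.eq_zero_of_comp_eq_two_mul (mul_left_surjective two) hd hbound 1
  simp only [d, mul_one, Units.val_one, sub_eq_zero, Nat.cast_inj] at hd_one
  exact Units.ext (val_injective n hd_one)

end ZMod

open ZMod

lemma mem_Phi_iff_even_val_two_mul {m : ℕ} (hm : Odd m) (x : (ZMod m)ˣ) :
    x ∈ Phi m ↔ Even (2 * x : ZMod m).val := by
  rw [even_val_two_mul_iff hm, Phi, Set.mem_ofPred_eq]
  obtain ⟨k, rfl⟩ := hm
  omega

lemma mem_Phi_two_mul_iff {n : ℕ} (hn : Odd n) (x : (ZMod (2 * n))ˣ) :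
    x ∈ Phi (2 * n) ↔ Odd (unitsMap (dvd_mul_left n 2) x : ZMod n).val := by
  have : NeZero n := ⟨hn.pos.ne'⟩
  have hx_odd : Odd (x : ZMod (2 * n)).val :=
    (Nat.Coprime.coprime_mul_right_right (val_coe_unit_coprime x)).odd_of_right
  rw [unitsMap_val, cast_eq_val, val_natCast, Phi, Set.mem_ofPred_eq]
  have hlt := (x : ZMod (2 * n)).val_lt
  obtain ⟨k, hk⟩ := hn
  rcases lt_or_ge (x : ZMod (2 * n)).val n with h | h
  · rw [Nat.mod_eq_of_lt h]
    simp only [hx_odd, iff_true]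
    omega
  · rw [Nat.mod_eq_sub_mod h, Nat.mod_eq_of_lt (by omega), Nat.odd_iff]
    rw [Nat.odd_iff] at hx_odd
    omega

lemma unitsMap_two_mul_bijective {n : ℕ} (hn : Odd n) :
    Bijective (unitsMap (dvd_mul_left n 2)) := by
  have : NeZero n := ⟨hn.pos.ne'⟩
  refine (Fintype.bijective_iff_surjective_and_card _).mpr ⟨unitsMap_surjective _, ?_⟩
  rw [card_units_eq_totient, card_units_eq_totient, Nat.totient_mul (Nat.coprime_two_left.mpr hn),
    Nat.totient_two, one_mul]

lemma eq_one_of_mul_mem_Phi_iff_of_odd {m : ℕ} (hm : Odd m) {u : (ZMod m)ˣ}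
    (hu : ∀ a, u * a ∈ Phi m ↔ a ∈ Phi m) : u = 1 := by
  refine eq_one_of_forall_even_val_mul_iff hm fun y => ?_
  obtain ⟨x, rfl⟩ := mul_left_surjective (unitOfCoprime 2 (Nat.coprime_two_left.mpr hm)) y
  simpa only [mem_Phi_iff_even_val_two_mul hm, Units.val_mul, coe_unitOfCoprime, Nat.cast_ofNat,
    mul_left_comm (u : ZMod m)] using hu x

lemma eq_one_of_mul_mem_Phi_iff_of_two_mul {n : ℕ} (hn : Odd n) {u : (ZMod (2 * n))ˣ}
    (hu : ∀ a, u * a ∈ Phi (2 * n) ↔ a ∈ Phi (2 * n)) : u = 1 := by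
  have hbij := unitsMap_two_mul_bijective hn
  refine hbij.injective ((eq_one_of_forall_even_val_mul_iff hn fun y => ?_).trans (map_one _).symm)
  obtain ⟨x, rfl⟩ := hbij.surjective y
  simpa only [mem_Phi_two_mul_iff hn, map_mul, Units.val_mul, ← Nat.not_even_iff_odd,
    not_iff_not] using hu x

theorem phi_stabilizer_trivial_general (m : ℕ) (hcase : Odd m ∨ m % 4 = 2)
    (u : (ZMod m)ˣ) (hstab : (fun a : (ZMod m)ˣ => u * a) '' Phi m = Phi m) :
    u = 1 := by
  have hu : ∀ a, u * a ∈ Phi m ↔ a ∈ Phi m := fun a => by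
    simpa only [hstab] using (mul_right_injective u).mem_set_image (s := Phi m) (a := a)
  rcases hcase with hodd | hmod
  · exact eq_one_of_mul_mem_Phi_iff_of_odd hodd hu
  · obtain ⟨n, rfl⟩ : ∃ n, m = 2 * n := ⟨m / 2, by omega⟩
    exact eq_one_of_mul_mem_Phi_iff_of_two_mul (Nat.odd_iff.mpr (by omega)) hu

/-- Lemma 3.2.1, first case. Let `m ≥ 3` be odd or congruent to `2` mod `4`.
Then the stabilizer of `Φ_m` under the multiplication action of `(ℤ/mℤ)ˣ` is trivial:
if `u • Φ_m = Φ_m` then `u = 1`. -/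
theorem phi_stabilizer_trivial (m : ℕ) (hm : 3 ≤ m) (hcase : Odd m ∨ m % 4 = 2)
    (u : (ZMod m)ˣ) (hstab : (fun a : (ZMod m)ˣ => u * a) '' Phi m = Phi m) :
    u = 1 :=
  phi_stabilizer_trivial_general m hcase u hstab
end

section
/- Let m ≥ 4 be an integer divisible by 4 with m ∉ {20, 24, 60}. Then the stabilizer of Φ_m under the multiplication action of (ℤ/mℤ)^× equals the two-element set {1, m/2 − 1} (the class of m/2 − 1 modulo m is indeed a unit, and if m = 4 this set degenerates to {1}). -/
/-!
Write `m = 4n`. A unit lies in `Φ_m` iff its residue is below `2n`, and as `Φ_m` is finite, `u`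
stabilises it iff multiplication by `v = val u` keeps every unit `c < 2n` below `2n`. On odd
residues `c < 2n` the multiplier `2n - 1` acts as `c ↦ 2n - c`; hence it stabilises `Φ_m`, and
composing with it reduces everything to excluding `3 ≤ v < n`.

Write `n = R N` with `R` odd and divisible by every odd prime factor of `n`, where `N ≥ 2` unless
`n` is odd and squarefree (then `R = n`). Adding `2R` preserves units, so `v` maps the low
progression `1, 1 + 2R, …` to a progression of step `2R (v mod 2N)` that must stay low; this forces
`v ≡ 1 (mod 2N)` and `v c mod 4n < 2R` for the units `c < 2R`. Testing `c = R + 2j` with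
`2j < R` leaves two cases, as `v R mod 4n` is `R` or `R + 2n`: either `v j` stays within `R/2` of
`0` modulo `2n`, which fails along `j = 2^t`, or within `R/2` of `n`. The latter forces `N = 1`
unless `n = 6` and puts `v` near `2n/3`. It then fails for `j = 3` if `3 ∤ n`; if
`3 ∣ n`, writing `v = 2n/3 ± f`, it fails for some `j ≡ ±1 (mod 3)` prime to `n` with
`n/3 < 2fj < 4n/3`. Only `n = 5` and `n = 15` survive.
-/

theorem mod_cases_of_lt_two_mul {a b : ℕ} (h : a < 2 * b) :
    a < b ∧ a % b = a ∨ b ≤ a ∧ a % b = a - b := by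
  rcases lt_or_ge a b with hab | hab
  · exact .inl ⟨hab, Nat.mod_eq_of_lt hab⟩
  · exact .inr ⟨hab, by rw [Nat.mod_eq_sub_mod hab, Nat.mod_eq_of_lt (by omega)]⟩

theorem mod_eq_of_eq_mul_add {a b q r : ℕ} (h : a = b * q + r) (hr : r < b) : a % b = r := by
  rw [h, Nat.mul_add_mod, Nat.mod_eq_of_lt hr]

theorem mod_three_eq_or_two_mul_mod_three_eq {x r : ℕ} (hx : ¬3 ∣ x) (hr : r % 3 ≠ 0) :
    x % 3 = r % 3 ∨ 2 * x % 3 = r % 3 := by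
  rw [Nat.mul_mod]
  rcases (by omega : x % 3 = 1 ∨ x % 3 = 2) with h | h <;>
    rcases (by omega : r % 3 = 1 ∨ r % 3 = 2) with h' | h' <;> simp [h, h']

theorem Nat.coprime_four_mul_iff {c n : ℕ} : c.Coprime (4 * n) ↔ Odd c ∧ c.Coprime n := by
  rw [Nat.coprime_mul_iff_right, show (4 : ℕ) = 2 ^ 2 by rfl,
    Nat.coprime_pow_right_iff two_pos, Nat.coprime_two_right]

theorem exists_odd_factor {n : ℕ} (hn : n ≠ 0) :
    ∃ R N, n = R * N ∧ Odd R ∧ (∀ c : ℕ, Odd c → c.Coprime R → c.Coprime n) ∧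
      (N = 1 ∧ Squarefree n ∨ 2 ≤ N) := by
  rcases Nat.even_or_odd n with hev | hodd
  · obtain ⟨k, m, hm, rfl⟩ := Nat.exists_eq_two_pow_mul_odd hn
    refine ⟨m, 2 ^ k, mul_comm _ _, hm, fun c hc hcm =>
      Nat.Coprime.mul_right (Nat.Coprime.pow_right _ (Nat.coprime_two_right.2 hc)) hcm, .inr ?_⟩
    rcases k with _ | k
    · exact absurd (by simpa using hev) (Nat.not_even_iff_odd.2 hm)
    · exact le_self_pow₀ one_le_two (Nat.succ_ne_zero k)
  · by_cases hsq : Squarefree n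
    · exact ⟨n, 1, (mul_one n).symm, hodd, fun _ _ h => h, .inl ⟨rfl, hsq⟩⟩
    obtain ⟨p, hp, hpp⟩ : ∃ p, p.Prime ∧ p * p ∣ n := by
      simpa [Nat.squarefree_iff_prime_squarefree] using hsq
    have hpn : n / p * p = n := Nat.div_mul_cancel (dvd_of_mul_left_dvd hpp)
    refine ⟨n / p, p, hpn.symm, hodd.of_dvd_nat (Nat.div_dvd_of_dvd (dvd_of_mul_left_dvd hpp)),
      fun c _ hc => ?_, .inr hp.two_le⟩
    rw [← hpn]
    exact hc.mul_right (hc.coprime_dvd_right (Nat.dvd_div_of_mul_dvd hpp))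

section Progression

variable {M L μ : ℕ} {x : ℕ → ℕ}

theorem eq_add_mul_of_forall_lt (hx : ∀ t, x (t + 1) = (x t + μ) % M) (hμ : L + μ ≤ M) :
    ∀ K, (∀ t ≤ K, x t < L) → x K = x 0 + K * μ
  | 0, _ => by simp
  | K + 1, hlow => by
    have ih := eq_add_mul_of_forall_lt hx hμ K fun t ht => hlow t (by omega)
    have hK := hlow K (by omega)
    rw [hx, Nat.mod_eq_of_lt (by omega), ih, add_one_mul, add_assoc]

theorem add_mul_eq_of_forall_lt (hx : ∀ t, x (t + 1) = (x t + μ) % M) (hLμ : L ≤ μ)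
    (hμM : μ < M) :
    ∀ K, (∀ t ≤ K, x t < L) → x K + K * (M - μ) = x 0
  | 0, _ => by simp
  | K + 1, hlow => by
    have ih := add_mul_eq_of_forall_lt hx hLμ hμM K fun t ht => hlow t (by omega)
    have hK := hlow K (by omega)
    have hK1 := hlow (K + 1) le_rfl
    rw [hx] at hK1 ⊢
    rw [add_one_mul]
    rcases mod_cases_of_lt_two_mul (a := x K + μ) (b := M) (by omega) with ⟨_, _⟩ | ⟨_, _⟩ <;>
      omega

end Progression

theorem le_one_of_forall_mul_two_pow_mod {Q R v : ℕ} (hR : Odd R) (hR3 : 3 ≤ R) (hvQ : 2 * v < Q)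
    (hRQ : 2 * R ≤ Q)
    (h : ∀ t, 2 * 2 ^ t < R → 2 * (v * 2 ^ t % Q) < R ∨ 2 * Q ≤ 2 * (v * 2 ^ t % Q) + R) :
    v ≤ 1 := by
  have doubling : ∀ t, 2 * 2 ^ t < R → 2 * (v * 2 ^ t) < R := by
    intro t
    induction t with
    | zero =>
      intro ht
      have := h 0 ht
      rw [pow_zero, mul_one, Nat.mod_eq_of_lt (by omega)] at this
      omega
    | succ t ih =>
      intro ht
      rw [pow_succ] at ht
      have ih := ih (by omega)
      have := h (t + 1) (by rw [pow_succ]; omega)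
      rw [show v * 2 ^ (t + 1) = 2 * (v * 2 ^ t) by ring] at this ⊢
      rw [Nat.mod_eq_of_lt (by omega)] at this
      omega
  obtain ⟨t, ht⟩ : ∃ t, Nat.log 2 R = t + 1 :=
    Nat.exists_eq_add_one_of_ne_zero (Nat.log_pos one_lt_two (by omega)).ne'
  have hlo := Nat.pow_log_le_self 2 (show R ≠ 0 by omega)
  have hhi := Nat.lt_pow_succ_log_self one_lt_two R
  rw [ht, pow_succ] at hlo
  rw [ht, pow_succ, pow_succ] at hhi
  have hodd := Nat.odd_iff.1 hR
  have := doubling t (by omega)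
  nlinarith

theorem exists_mod_three_eq_coprime_mul_mem {R f r : ℕ} (hR : Odd R) (h3 : ¬3 ∣ R) (hR7 : 7 ≤ R)
    (hf : 0 < f) (hfR : 2 * f < R) (hr : r % 3 ≠ 0) :
    ∃ j, j % 3 = r % 3 ∧ j.Coprime R ∧ 2 * j < 3 * R ∧ R < 2 * (f * j) ∧ 2 * (f * j) < 4 * R := by
  rcases Nat.lt_or_ge f 2 with hf1 | hf2
  · obtain rfl : f = 1 := by omega
    obtain ⟨i, hi1, hi3, hir⟩ : ∃ i, 1 ≤ i ∧ i ≤ 3 ∧ (R + i) % 3 = r % 3 := by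
      rcases (by omega : (R + 1) % 3 = r % 3 ∨ (R + 2) % 3 = r % 3 ∨ (R + 3) % 3 = r % 3)
        with h | h | h
      exacts [⟨1, le_rfl, by norm_num, h⟩, ⟨2, by norm_num, by norm_num, h⟩,
        ⟨3, by norm_num, le_rfl, h⟩]
    have hiR : i.Coprime R := by
      interval_cases i
      exacts [Nat.coprime_one_left R, Nat.coprime_two_left.2 hR,
        (Nat.Prime.coprime_iff_not_dvd Nat.prime_three).2 h3]
    exact ⟨R + i, hir, Nat.coprime_self_add_left.2 hiR, by omega, by omega, by omega⟩
  · have hRf : 2 ≤ R / f := (Nat.le_div_iff_mul_le hf).2 (by omega)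
    obtain ⟨t, ht⟩ : ∃ t, Nat.log 2 (R / f) = t + 1 :=
      Nat.exists_eq_add_one_of_ne_zero (Nat.log_pos one_lt_two hRf).ne'
    have h3X : ¬3 ∣ 2 ^ (t + 1) := fun h => by
      have := Nat.Prime.dvd_of_dvd_pow Nat.prime_three h
      omega
    have hXr := mod_three_eq_or_two_mul_mod_three_eq h3X hr
    have hlo : f * 2 ^ (t + 1) ≤ R := by
      rw [mul_comm, ← ht]
      exact (Nat.le_div_iff_mul_le hf).1 (Nat.pow_log_le_self 2 (by omega))
    have hhi : R < 2 * (f * 2 ^ (t + 1)) := by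
      rw [show 2 * (f * 2 ^ (t + 1)) = 2 ^ (t + 1 + 1) * f by ring, ← ht]
      exact (Nat.div_lt_iff_lt_mul hf).1 (Nat.lt_pow_succ_log_self one_lt_two _)
    have hX2 : 2 * 2 ^ (t + 1) ≤ f * 2 ^ (t + 1) := Nat.mul_le_mul_right _ hf2
    have hXe : f * 2 ^ (t + 1) = 2 * (f * 2 ^ t) := by ring
    have hR2 := Nat.odd_iff.1 hR
    have hcop : ∀ k, (2 ^ k).Coprime R := fun k =>
      Nat.Coprime.pow_left k (Nat.coprime_two_left.2 hR)
    rcases hXr with h | h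
    · exact ⟨2 ^ (t + 1), h, hcop _, by omega, by omega, by omega⟩
    · refine ⟨2 * 2 ^ (t + 1), h, by rw [← pow_succ']; exact hcop _, by omega, ?_, ?_⟩ <;>
        rw [show f * (2 * 2 ^ (t + 1)) = 2 * (f * 2 ^ (t + 1)) by ring] <;> omega

theorem mul_mod_six_mul_eq_sub {R v f j : ℕ} (hR : 0 < R) (hvf : v + f = 2 * R) (hj : j % 3 = 1)
    (hfj : f * j ≤ 2 * R) : v * j % (6 * R) = 2 * R - f * j := by
  obtain ⟨q, rfl⟩ : ∃ q, j = 3 * q + 1 := ⟨j / 3, by omega⟩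
  have h : v * (3 * q + 1) + f * (3 * q + 1) = 6 * R * q + 2 * R := by
    rw [← add_mul, hvf]; ring
  exact mod_eq_of_eq_mul_add (q := q) (by omega) (by omega)

theorem mul_mod_six_mul_eq_add {R v f j : ℕ} (hvf : v = 2 * R + f) (hj : j % 3 = 2)
    (hfj : f * j < 2 * R) : v * j % (6 * R) = 4 * R + f * j := by
  obtain ⟨q, rfl⟩ : ∃ q, j = 3 * q + 2 := ⟨j / 3, by omega⟩
  exact mod_eq_of_eq_mul_add (q := q) (by rw [hvf]; ring) (by omega)

def PreservesLowerHalf (n v : ℕ) : Prop :=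
  ∀ c < 2 * n, c.Coprime (4 * n) → v * c % (4 * n) < 2 * n

theorem preservesLowerHalf_one {n : ℕ} : PreservesLowerHalf n 1 := fun c hc _ => by
  rw [one_mul, Nat.mod_eq_of_lt (by omega)]
  exact hc

namespace PreservesLowerHalf

variable {n v : ℕ}

theorem lt_two_mul (hP : PreservesLowerHalf n v) (hn : 0 < n) (hv : v < 4 * n) : v < 2 * n := by
  have := hP 1 (by omega) (Nat.coprime_one_left _)
  rwa [mul_one, Nat.mod_eq_of_lt hv] at this

/-- For odd `c`, `(2n - v) c ≡ 2n - v c (mod 4n)`. -/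
theorem two_mul_sub (hP : PreservesLowerHalf n v) (hv : Odd v) (hv2n : v < 2 * n) :
    PreservesLowerHalf n (2 * n - v) := by
  intro c hc hcop
  obtain ⟨k, rfl⟩ := (Nat.coprime_four_mul_iff.1 hcop).1
  set r := v * (2 * k + 1) % (4 * n) with hr
  have hr_odd : r % 2 = 1 := by
    rw [hr, Nat.mod_mod_of_dvd _ (by omega : 2 ∣ 4 * n), Nat.mul_mod, Nat.odd_iff.1 hv]
    omega
  have hrn := hP _ hc hcop
  have key : (2 * n - v) * (2 * k + 1) + r ≡ 2 * n - r + r [MOD 4 * n] :=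
    calc (2 * n - v) * (2 * k + 1) + r
          ≡ (2 * n - v) * (2 * k + 1) + v * (2 * k + 1) [MOD 4 * n] :=
            (Nat.mod_modEq _ _).add_left _
      _ = 2 * n + 4 * n * k := by rw [← add_mul, Nat.sub_add_cancel hv2n.le]; ring
      _ ≡ 2 * n - r + r [MOD 4 * n] := by
          rw [Nat.sub_add_cancel hrn.le]; exact Nat.add_mul_mod_self_left _ _ _
  rw [Nat.ModEq.add_right_cancel' r key, Nat.mod_eq_of_lt (by omega)]
  omega

end PreservesLowerHalf

section Window

variable {n R N v : ℕ}

theorem mul_add_two_mul_succ_mod (hRN : n = R * N) (c t : ℕ) :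
    v * (c + 2 * R * (t + 1)) % (4 * n) =
      (v * (c + 2 * R * t) % (4 * n) + 2 * R * (v % (2 * N))) % (4 * n) := by
  rw [show v * (c + 2 * R * (t + 1)) = v * (c + 2 * R * t) + 2 * R * v by ring, Nat.add_mod,
    show 4 * n = 2 * R * (2 * N) by rw [hRN]; ring, Nat.mul_mod_mul_left]

/-- The progression `c, c + 2R, …, c + 2R(N - 1)` runs through low units; its image under `v` is
again a progression, of step `2R (v mod 2N)`, and staying low forces that step to be `2R`. -/
theorem mod_two_mul_eq_one_and_window (hRN : n = R * N) (hN : 2 ≤ N) (hv : Odd v) (hvn : v < n)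
    (hP : ∀ c < 2 * n, Odd c → c.Coprime R → v * c % (4 * n) < 2 * n) :
    v % (2 * N) = 1 ∧ ∀ c < 2 * R, Odd c → c.Coprime R → v * c % (4 * n) < 2 * R := by
  obtain ⟨K, rfl⟩ : ∃ K, N = K + 1 := ⟨N - 1, by omega⟩
  have hn : n = R * K + R := by rw [hRN]; ring
  have hR : 0 < R := Nat.pos_of_ne_zero fun hR => by simp [hR] at hn; omega
  have hstep := fun c => mul_add_two_mul_succ_mod (v := v) hRN c
  set s := v % (2 * (K + 1)) with hs
  have hs_odd : s % 2 = 1 := by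
    rw [hs, Nat.mod_mod_of_dvd _ (dvd_mul_right 2 _)]
    exact Nat.odd_iff.1 hv
  have hs2N : s < 2 * (K + 1) := Nat.mod_lt _ (by omega)
  have hlow : ∀ c < 2 * R, Odd c → c.Coprime R →
      ∀ t ≤ K, v * (c + 2 * R * t) % (4 * n) < 2 * n := by
    intro c hc hodd hcop t ht
    refine hP _ ?_ (hodd.add_even (by rw [mul_assoc]; exact even_two_mul _)) ?_
    · nlinarith
    · rw [show c + 2 * R * t = c + 2 * t * R by ring]
      exact (Nat.coprime_add_mul_right_left _ _ _).2 hcop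
  have hone := hlow 1 (by omega) odd_one (Nat.coprime_one_left R)
  have hv4n : v * (1 + 2 * R * 0) % (4 * n) = v := by
    rw [mul_zero, add_zero, mul_one, Nat.mod_eq_of_lt (by omega)]
  have hs1 : s = 1 := by
    rcases lt_or_ge s (K + 1) with hsN | hsN
    · have hchain := eq_add_mul_of_forall_lt (x := fun t => v * (1 + 2 * R * t) % (4 * n))
        (L := 2 * n) (hstep 1) (by nlinarith) K hone
      have hK := hone K le_rfl
      simp only [hv4n] at hchain
      rw [hchain] at hK
      by_contra hs1
      have : 3 ≤ s := by omega
      nlinarith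
    · have hchain := add_mul_eq_of_forall_lt (x := fun t => v * (1 + 2 * R * t) % (4 * n))
        (L := 2 * n) (hstep 1) (by nlinarith) (by nlinarith) K hone
      simp only [hv4n] at hchain
      have : 2 * R ≤ 4 * n - 2 * R * s := by
        have : 2 * R * s + 2 * R ≤ 4 * n := by nlinarith
        omega
      have := Nat.mul_le_mul_left K this
      rw [show K * (2 * R) = 2 * (R * K) by ring] at this
      have := Nat.le_mul_of_pos_right R (show 0 < K by omega)
      omega
  refine ⟨hs1, fun c hc hodd hcop => ?_⟩
  have hchain := eq_add_mul_of_forall_lt (x := fun t => v * (c + 2 * R * t) % (4 * n))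
    (L := 2 * n) (hstep c) (by rw [hs1]; nlinarith) K
    (hlow c hc hodd hcop)
  have hK := hlow c hc hodd hcop K le_rfl
  simp only [mul_zero, add_zero] at hchain
  rw [hchain] at hK
  nlinarith

theorem mul_mod_four_mul_eq (hRN : n = R * N) (hRn : R < 2 * n) (hvN : v % (2 * N) = 1) :
    v * R % (4 * n) = R ∨ v * R % (4 * n) = R + 2 * n := by
  have hv := Nat.div_add_mod v (2 * N)
  rcases Nat.even_or_odd' (v / (2 * N)) with ⟨q, hq | hq⟩ <;> rw [hq, hvN] at hv
  · left
    exact mod_eq_of_eq_mul_add (q := q) (by rw [← hv, hRN]; ring) (by omega)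
  · right
    exact mod_eq_of_eq_mul_add (q := q) (by rw [← hv, hRN]; ring) (by omega)

theorem mul_add_two_mul_mod (j : ℕ) :
    v * (R + 2 * j) % (4 * n) = (v * R % (4 * n) + 2 * (v * j % (2 * n))) % (4 * n) := by
  rw [mul_add, Nat.add_mod, show 4 * n = 2 * (2 * n) by ring,
    show v * (2 * j) = 2 * (v * j) by ring, Nat.mul_mod_mul_left]

theorem window_add_two_mul (hR : Odd R)
    (hW : ∀ c < 2 * R, Odd c → c.Coprime R → v * c % (4 * n) < 2 * R)
    {j : ℕ} (hjR : 2 * j < R) (hj : j.Coprime R) :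
    (v * R % (4 * n) + 2 * (v * j % (2 * n))) % (4 * n) < 2 * R := by
  rw [← mul_add_two_mul_mod]
  exact hW _ (by omega) (hR.add_even (even_two_mul j))
    (Nat.coprime_self_add_left.2 (Nat.Coprime.mul_left (Nat.coprime_two_left.2 hR) hj))

theorem near_zero_of_window (hR : Odd R) (hRn : R ≤ n)
    (hW : ∀ c < 2 * R, Odd c → c.Coprime R → v * c % (4 * n) < 2 * R)
    (hε : v * R % (4 * n) = R) {j : ℕ} (hjR : 2 * j < R) (hj : j.Coprime R) :
    2 * (v * j % (2 * n)) < R ∨ 2 * (2 * n) ≤ 2 * (v * j % (2 * n)) + R := by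
  have h := window_add_two_mul hR hW hjR hj
  have hx := Nat.mod_lt (v * j) (show 0 < 2 * n by omega)
  rw [hε] at h
  rcases mod_cases_of_lt_two_mul (a := R + 2 * (v * j % (2 * n))) (b := 4 * n) (by omega)
    with ⟨_, h'⟩ | ⟨_, h'⟩ <;> omega

end Window

def NearHalf (n R v : ℕ) : Prop :=
  ∀ j, 0 < j → 2 * j < R → j.Coprime R →
    2 * n ≤ 2 * (v * j % (2 * n)) + R ∧ 2 * (v * j % (2 * n)) < 2 * n + R

theorem nearHalf_of_window {n R v : ℕ} (hR : Odd R) (hRn : R ≤ n)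
    (hW : ∀ c < 2 * R, Odd c → c.Coprime R → v * c % (4 * n) < 2 * R)
    (hε : v * R % (4 * n) = R + 2 * n) : NearHalf n R v := by
  intro j _ hjR hj
  have h := window_add_two_mul hR hW hjR hj
  have hx := Nat.mod_lt (v * j) (show 0 < 2 * n by omega)
  rw [hε] at h
  rcases mod_cases_of_lt_two_mul (a := R + 2 * n + 2 * (v * j % (2 * n))) (b := 4 * n)
    (by omega) with ⟨_, h'⟩ | ⟨_, h'⟩ <;> omega

namespace NearHalf

variable {n R v : ℕ}

theorem bounds (hH : NearHalf n R v) (hR : Odd R) (hR5 : 5 ≤ R) (hvn : v < n) :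
    2 * n ≤ 2 * v + R ∧ 4 * v < 2 * n + R := by
  have h1 := hH 1 one_pos (by omega) (Nat.coprime_one_left R)
  have h2 := hH 2 two_pos (by omega) (Nat.coprime_two_left.2 hR)
  rw [mul_one, Nat.mod_eq_of_lt (by omega)] at h1
  rw [Nat.mod_eq_of_lt (by omega)] at h2
  omega

/-- Writing `v = 2R ± f`, a multiplier `j ≡ ±1 (mod 3)` with `R < 2fj` pushes `v * j` out of the
window around `3R` modulo `6R`. -/
theorem false_of_three_mul (hH : NearHalf (3 * R) (3 * R) v) (hR : Odd R) (h3 : ¬3 ∣ R)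
    (hR7 : 7 ≤ R) (hv : Odd v) (hv1 : 3 * R ≤ 2 * v) (hv2 : 4 * v < 9 * R) : False := by
  have hH' : ∀ j, j % 3 ≠ 0 → j.Coprime R → 2 * j < 3 * R → 0 < j →
      6 * R ≤ 2 * (v * j % (6 * R)) + 3 * R ∧ 2 * (v * j % (6 * R)) < 9 * R := by
    intro j hj3 hjR hj hj0
    have h3j : j.Coprime 3 :=
      ((Nat.Prime.coprime_iff_not_dvd Nat.prime_three).2 (by omega)).symm
    have := hH j hj0 hj (h3j.mul_right hjR)
    rwa [show 2 * (3 * R) = 6 * R by ring, show 6 * R + 3 * R = 9 * R by ring] at this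
  have hR2 := Nat.odd_iff.1 hR
  have hv2' := Nat.odd_iff.1 hv
  rcases lt_or_gt_of_ne (show v ≠ 2 * R by omega) with hlt | hgt
  · obtain ⟨j, hj3, hjR, hj, hfj, hfj'⟩ := exists_mod_three_eq_coprime_mul_mem (f := 2 * R - v)
      (r := 1) hR h3 hR7 (by omega) (by omega) (by norm_num)
    have hj0 : 0 < j := Nat.pos_of_ne_zero fun h => by simp [h] at hfj
    have := (hH' j (by omega) hjR hj hj0).1
    rw [mul_mod_six_mul_eq_sub (f := 2 * R - v) (by omega) (by omega) hj3 (by omega)] at this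
    omega
  · obtain ⟨j, hj3, hjR, hj, hfj, hfj'⟩ := exists_mod_three_eq_coprime_mul_mem (f := v - 2 * R)
      (r := 2) hR h3 hR7 (by omega) (by omega) (by norm_num)
    have hj0 : 0 < j := Nat.pos_of_ne_zero fun h => by simp [h] at hfj
    have := (hH' j (by omega) hjR hj hj0).2
    rw [mul_mod_six_mul_eq_add (f := v - 2 * R) (by omega) hj3 (by omega)] at this
    omega

theorem eq_five_or_fifteen (hH : NearHalf n n v) (hn : Odd n) (hsq : Squarefree n) (hn5 : 5 ≤ n)
    (hv : Odd v) (hvn : v < n) : n = 5 ∨ n = 15 := by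
  obtain ⟨h1, h2⟩ := hH.bounds hn hn5 hvn
  by_cases h3 : 3 ∣ n
  · obtain ⟨R, rfl⟩ := h3
    have hR : Odd R := (Nat.odd_mul.1 hn).2
    have h3R : ¬3 ∣ R := fun ⟨k, hk⟩ => Nat.squarefree_iff_prime_squarefree.1 hsq 3
      Nat.prime_three ⟨k, by rw [hk]; ring⟩
    have := Nat.odd_iff.1 hR
    rcases (by omega : R = 5 ∨ 7 ≤ R) with rfl | hR7
    · exact .inr rfl
    · exact (hH.false_of_three_mul hR h3R hR7 hv (by omega) (by omega)).elim
  · have := Nat.odd_iff.1 hn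
    rcases (by omega : n = 5 ∨ 7 ≤ n) with h5 | h7
    · exact .inl h5
    have h := hH 3 three_pos (by omega)
      ((Nat.Prime.coprime_iff_not_dvd Nat.prime_three).2 h3)
    rcases mod_cases_of_lt_two_mul (a := v * 3) (b := 2 * n) (by omega) with ⟨_, h'⟩ | ⟨_, h'⟩ <;>
      omega

end NearHalf

theorem eq_five_or_six_or_fifteen_of_window {n R N v : ℕ} (hRN : n = R * N) (hR : Odd R)
    (hN : N = 1 ∧ Squarefree n ∨ 2 ≤ N) (hv : Odd v) (hv3 : 3 ≤ v) (hvn : v < n)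
    (hvN : v % (2 * N) = 1)
    (hW : ∀ c < 2 * R, Odd c → c.Coprime R → v * c % (4 * n) < 2 * R) :
    n = 5 ∨ n = 6 ∨ n = 15 := by
  have hR1 := Nat.odd_iff.1 hR
  have hRn : R ≤ n := hRN ▸ Nat.le_mul_of_pos_right R (by rcases hN with ⟨rfl, -⟩ | h <;> omega)
  have hv2R := hW 1 (by omega) odd_one (Nat.coprime_one_left R)
  rw [mul_one, Nat.mod_eq_of_lt (by omega)] at hv2R
  rcases mul_mod_four_mul_eq hRN (by omega) hvN with hε | hε
  · have := le_one_of_forall_mul_two_pow_mod (Q := 2 * n) hR (by omega) (by omega) (by omega)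
      fun t ht => near_zero_of_window hR hRn hW hε ht
        (Nat.Coprime.pow_left t (Nat.coprime_two_left.2 hR))
    omega
  have hH := nearHalf_of_window hR hRn hW hε
  rcases (by omega : R = 3 ∨ 5 ≤ R) with rfl | hR5
  · have : 2 * N ≤ v := by
      by_contra h
      rw [Nat.mod_eq_of_lt (by omega)] at hvN
      omega
    omega
  obtain ⟨hb1, hb2⟩ := hH.bounds hR hR5 hvn
  obtain rfl : N = 1 := by
    by_contra hN1
    have := Nat.mul_le_mul_left R (show 2 ≤ N by rcases hN with ⟨h, -⟩ | h <;> omega)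
    omega
  rw [mul_one] at hRN
  subst hRN
  obtain ⟨-, hsq⟩ := hN.resolve_right (by norm_num)
  rcases hH.eq_five_or_fifteen hR hsq hR5 hv hvn with h | h <;> simp [h]

namespace PreservesLowerHalf

variable {n v : ℕ}

theorem eq_five_or_six_or_fifteen (hP : PreservesLowerHalf n v) (hv : Odd v) (hv3 : 3 ≤ v)
    (hvn : v < n) : n = 5 ∨ n = 6 ∨ n = 15 := by
  obtain ⟨R, N, hRN, hR, hRn, hN⟩ := exists_odd_factor (n := n) (by omega)
  have hP' : ∀ c < 2 * n, Odd c → c.Coprime R → v * c % (4 * n) < 2 * n := fun c hc hodd hcop =>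
    hP c hc (Nat.coprime_four_mul_iff.2 ⟨hodd, hRn c hodd hcop⟩)
  obtain ⟨hvN, hW⟩ : v % (2 * N) = 1 ∧
      ∀ c < 2 * R, Odd c → c.Coprime R → v * c % (4 * n) < 2 * R := by
    rcases hN with ⟨rfl, -⟩ | hN
    · rw [mul_one] at hRN
      subst hRN
      exact ⟨Nat.odd_iff.1 hv, hP'⟩
    · exact mod_two_mul_eq_one_and_window hRN hN hv hvn hP'
  exact eq_five_or_six_or_fifteen_of_window hRN hR hN hv hv3 hvn hvN hW

end PreservesLowerHalf

theorem preservesLowerHalf_iff {n v : ℕ} (hn : 0 < n) (h5 : n ≠ 5) (h6 : n ≠ 6) (h15 : n ≠ 15)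
    (hv : v.Coprime (4 * n)) (hv4 : v < 4 * n) :
    PreservesLowerHalf n v ↔ v = 1 ∨ v = 2 * n - 1 := by
  have hodd := (Nat.coprime_four_mul_iff.1 hv).1
  have hv2 := Nat.odd_iff.1 hodd
  refine ⟨fun hP => ?_, ?_⟩
  · have hv2n := hP.lt_two_mul hn hv4
    by_contra hne
    rcases lt_trichotomy v n with hlt | rfl | hgt
    · have := hP.eq_five_or_six_or_fifteen hodd (by omega) hlt
      omega
    · have := (Nat.coprime_self _).1 (Nat.coprime_mul_iff_right.1 hv).2
      omega
    · have := (hP.two_mul_sub hodd hv2n).eq_five_or_six_or_fifteen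
        (Nat.odd_iff.2 (by omega)) (by omega) (by omega)
      omega
  · rintro (rfl | rfl)
    · exact preservesLowerHalf_one
    · exact preservesLowerHalf_one.two_mul_sub odd_one (by omega)

theorem mem_Phi_iff {m : ℕ} [NeZero m] (a : (ZMod m)ˣ) :
    a ∈ Phi m ↔ 2 * (a : ZMod m).val < m := by
  have := NeZero.pos m
  change (a : ZMod m).val ≤ (m - 1) / 2 ↔ _
  omega

theorem image_mul_left_eq_self_iff {G : Type*} [Group G] [Finite G] (u : G) (s : Set G) :
    (fun a => u * a) '' s = s ↔ ∀ a ∈ s, u * a ∈ s := by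
  refine ⟨fun h a ha => h ▸ Set.mem_image_of_mem _ ha, fun h => ?_⟩
  refine Set.eq_of_subset_of_ncard_le (Set.image_subset_iff.2 h) ?_ (Set.toFinite _)
  rw [Set.ncard_image_of_injective _ (mul_right_injective u)]

theorem forall_mul_mem_Phi_iff {n : ℕ} (hn : 0 < n) (u : (ZMod (4 * n))ˣ) :
    (∀ a ∈ Phi (4 * n), u * a ∈ Phi (4 * n)) ↔ PreservesLowerHalf n (u : ZMod (4 * n)).val := by
  have : NeZero (4 * n) := ⟨by omega⟩
  simp only [mem_Phi_iff, Units.val_mul, ZMod.val_mul]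
  refine ⟨fun h c hc hcop => ?_, fun h a ha => ?_⟩
  · have := h (ZMod.unitOfCoprime c hcop)
    rw [ZMod.coe_unitOfCoprime, ZMod.val_cast_of_lt (by omega)] at this
    omega
  · have := h _ (by omega) (ZMod.val_coe_unit_coprime a)
    omega

theorem Nat.coprime_two_mul_sub_one_four_mul {n : ℕ} (hn : 0 < n) :
    (2 * n - 1).Coprime (4 * n) := by
  refine Nat.coprime_four_mul_iff.2 ⟨Nat.odd_iff.2 (by omega), ?_⟩
  rw [show 2 * n - 1 = n - 1 + n by omega, Nat.coprime_add_self_left, Nat.coprime_self_sub_left hn]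
  exact Nat.coprime_one_left n

theorem ZMod.eq_natCast_iff_val_eq_of_lt {m k : ℕ} [NeZero m] (x : ZMod m) (hk : k < m) :
    x = k ↔ x.val = k :=
  ⟨fun h => h ▸ ZMod.val_cast_of_lt hk, fun h => h ▸ (ZMod.natCast_zmod_val x).symm⟩

/-- Lemma 3.2.1, generic `4 ∣ m` case. Let `m ≥ 4` be divisible by `4` with
`m ∉ {20, 24, 60}`. Then the class of `m/2 - 1` is a unit of `ℤ/mℤ`, and the stabilizer of
`Φ_m` under the multiplication action of `(ℤ/mℤ)ˣ` is exactly `{1, m/2 - 1}`. -/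
theorem phi_stabilizer_of_four_dvd (m : ℕ) (hm : 4 ≤ m) (h4 : 4 ∣ m)
    (h20 : m ≠ 20) (h24 : m ≠ 24) (h60 : m ≠ 60) :
    IsUnit ((m / 2 - 1 : ℕ) : ZMod m) ∧
      ∀ u : (ZMod m)ˣ,
        (fun a : (ZMod m)ˣ => u * a) '' Phi m = Phi m ↔
          (u : ZMod m) = 1 ∨ (u : ZMod m) = ((m / 2 - 1 : ℕ) : ZMod m) := by
  obtain ⟨n, rfl⟩ := h4
  have hn : 0 < n := by omega
  have : NeZero (4 * n) := ⟨by omega⟩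
  rw [show 4 * n / 2 - 1 = 2 * n - 1 by omega]
  refine ⟨(ZMod.isUnit_iff_coprime _ _).2 (Nat.coprime_two_mul_sub_one_four_mul hn), fun u => ?_⟩
  rw [image_mul_left_eq_self_iff, forall_mul_mem_Phi_iff hn,
    preservesLowerHalf_iff hn (by omega) (by omega) (by omega) (ZMod.val_coe_unit_coprime u)
      (ZMod.val_lt _),
    ZMod.eq_natCast_iff_val_eq_of_lt _ (by omega), ← ZMod.val_eq_one (by omega)]
end

section
/- For m = 20, the stabilizer of Φ_m under the multiplication action of (ℤ/mℤ)^× equals {1, 3, 7, 9}; for m = 24 it equals {1, 5, 7, 11}; and for m = 60 it equals {1, 11, 19, 29}. -/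
lemma phi_image_eq_iff (m : ℕ) (u : (ZMod m)ˣ) :
    (fun a : (ZMod m)ˣ => u * a) '' Phi m = Phi m ↔
      ∀ a : (ZMod m)ˣ, (a ∈ Phi m ↔ u * a ∈ Phi m) := by
  rw [Set.ext_iff]
  constructor
  · intro h a
    constructor
    · intro ha
      exact (h (u * a)).1 ⟨a, ha, rfl⟩
    · intro ha
      rcases (h (u * a)).2 ha with ⟨b, hb, hba⟩
      have : b = a := mul_left_cancel hba
      rwa [this] at hb
  · intro h x
    constructor
    · rintro ⟨a, ha, rfl⟩
      exact (h a).1 ha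
    · intro hx
      exact ⟨u⁻¹ * x, (h _).2 (by simpa [← mul_assoc] using hx), by simp [← mul_assoc]⟩

set_option maxRecDepth 4000

/-- Lemma 3.2.1, exceptional cases. The stabilizer of `Φ_m` under the
multiplication action of `(ℤ/mℤ)ˣ` is `{1, 3, 7, 9}` for `m = 20`, `{1, 5, 7, 11}` for
`m = 24`, and `{1, 11, 19, 29}` for `m = 60`. -/
theorem phi_stabilizer_exceptional :
    (∀ u : (ZMod 20)ˣ,
        (fun a : (ZMod 20)ˣ => u * a) '' Phi 20 = Phi 20 ↔
          (u : ZMod 20) ∈ ({1, 3, 7, 9} : Set (ZMod 20))) ∧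
    (∀ u : (ZMod 24)ˣ,
        (fun a : (ZMod 24)ˣ => u * a) '' Phi 24 = Phi 24 ↔
          (u : ZMod 24) ∈ ({1, 5, 7, 11} : Set (ZMod 24))) ∧
    (∀ u : (ZMod 60)ˣ,
        (fun a : (ZMod 60)ˣ => u * a) '' Phi 60 = Phi 60 ↔
          (u : ZMod 60) ∈ ({1, 11, 19, 29} : Set (ZMod 60))) := by
  refine ⟨fun u => ?_, fun u => ?_, fun u => ?_⟩ <;>
    rw [phi_image_eq_iff] <;>
    simp only [Phi, Set.mem_setOf_eq, Set.mem_insert_iff, Set.mem_singleton_iff] <;>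
    revert u <;> decide
end

section
/- Let p be an odd prime and k ≥ 2 an integer. Let G₁ = (ℤ/p^kℤ)^×, G₂ = (ℤ/p^{k−1}ℤ)^×, and let r: G₁ → G₂ be the reduction map. Let Φ₁ ⊆ G₁ be the set of units with least positive residue at most (p^k − 1)/2, and Φ₂ ⊆ G₂ the set of units with least positive residue at most (p^{k−1} − 1)/2. Then for every τ ∈ G₂ the following identity holds in the group ring ℤ[G₁]: ∑_{σ ∈ G₁, r(σ) = τ} ∑_{a ∈ Φ₁} [a^{−1}·σ] = ((p−1)/2)·∑_{σ ∈ G₁} [σ] + ∑_{b ∈ Φ₂} ∑_{σ ∈ G₁, r(σ) = b^{−1}·τ} [σ]. -/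
open Finset

private lemma val_unitsMap_eq' {N q : ℕ} [NeZero N] [NeZero q] (h : q ∣ N)
    (a : (ZMod N)ˣ) :
    ((ZMod.unitsMap h a : ZMod q)).val = ((a : ZMod N)).val % q := by
  rw [ZMod.unitsMap_def]
  simp only [Units.coe_map, MonoidHom.coe_coe, ZMod.castHom_apply]
  rw [← ZMod.natCast_val, ZMod.val_natCast]

private lemma fiber_count' (N q p : ℕ) [NeZero N] [NeZero q]
    (hNq : N = q * p) (hq1 : 1 < q) (hp3 : 3 ≤ p)
    (hpodd : Odd p) (hqodd : Odd q) (h : q ∣ N)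
    (c : (ZMod q)ˣ)
    (hco : ∀ j : ℕ, Nat.Coprime ((c : ZMod q).val + j * q) N) :
    (Finset.univ.filter (fun a : (ZMod N)ˣ =>
        ((a : ZMod N).val ≤ (N - 1) / 2) ∧ ZMod.unitsMap h a = c)).card
    = (p - 1) / 2 + (if ((c : ZMod q).val ≤ (q - 1) / 2) then 1 else 0) := by
  set v : ℕ := (c : ZMod q).val with hv
  have hvq : v < q := ZMod.val_lt _
  have hcq : Nat.Coprime v q := ZMod.val_coe_unit_coprime c
  have hv0 : 0 < v := by
    rcases Nat.eq_zero_or_pos v with h0 | h0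
    · exfalso; rw [h0] at hcq; simp [Nat.Coprime] at hcq; omega
    · exact h0
  have hqpos : 0 < q := by omega
  have hlt : ∀ j : ℕ, j < p → v + j * q < N := by
    intro j hj
    have h3 : v + j * q < (j + 1) * q := by
      rw [add_one_mul]
      exact Nat.add_lt_add_right hvq (j * q) |>.trans_le (le_of_eq (by ring))
    refine h3.trans_le ?_
    calc (j + 1) * q ≤ p * q := Nat.mul_le_mul_right q hj
      _ = N := by rw [hNq]; ring
  have hcard : (Finset.univ.filter (fun a : (ZMod N)ˣ =>
        ((a : ZMod N).val ≤ (N - 1) / 2) ∧ ZMod.unitsMap h a = c)).card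
      = ((Finset.range p).filter (fun j => v + j * q ≤ (N - 1) / 2)).card := by
    symm
    apply Finset.card_bij' (fun j _ => ZMod.unitOfCoprime (v + j * q) (hco j))
      (fun a _ => (a : ZMod N).val / q)
    · intro j hj
      simp only [Finset.mem_filter, Finset.mem_range] at hj
      have hval : ((ZMod.unitOfCoprime (v + j * q) (hco j) : ZMod N)).val = v + j * q := by
        rw [ZMod.coe_unitOfCoprime, ZMod.val_natCast, Nat.mod_eq_of_lt (hlt j hj.1)]
      simp only [Finset.mem_filter, Finset.mem_univ, true_and]
      constructor
      · rw [hval]; exact hj.2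
      · apply Units.ext
        apply ZMod.val_injective
        rw [val_unitsMap_eq' h, hval]
        rw [Nat.add_mul_mod_self_right, Nat.mod_eq_of_lt hvq]
    · intro a ha
      simp only [Finset.mem_filter, Finset.mem_univ, true_and] at ha
      have hmod : (a : ZMod N).val % q = v := by
        have := val_unitsMap_eq' h a
        rw [ha.2] at this
        exact this.symm
      simp only [Finset.mem_filter, Finset.mem_range]
      constructor
      · have h1 : (a : ZMod N).val < q * p := hNq ▸ ZMod.val_lt _
        exact Nat.div_lt_of_lt_mul h1
      · have hdecomp : v + ((a : ZMod N).val / q) * q = (a : ZMod N).val := by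
          conv_rhs => rw [← Nat.div_add_mod ((a : ZMod N).val) q]
          rw [hmod]; ring
        rw [hdecomp]; exact ha.1
    · intro j hj
      simp only [Finset.mem_filter, Finset.mem_range] at hj
      have hval : ((ZMod.unitOfCoprime (v + j * q) (hco j) : ZMod N)).val = v + j * q := by
        rw [ZMod.coe_unitOfCoprime, ZMod.val_natCast, Nat.mod_eq_of_lt (hlt j hj.1)]
      rw [hval, Nat.add_mul_div_right _ _ hqpos, Nat.div_eq_of_lt hvq, zero_add]
    · intro a ha
      simp only [Finset.mem_filter, Finset.mem_univ, true_and] at ha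
      have hmod : (a : ZMod N).val % q = v := by
        have := val_unitsMap_eq' h a
        rw [ha.2] at this
        exact this.symm
      have hdecomp : v + ((a : ZMod N).val / q) * q = (a : ZMod N).val := by
        conv_rhs => rw [← Nat.div_add_mod ((a : ZMod N).val) q]
        rw [hmod]; ring
      apply Units.ext
      apply ZMod.val_injective
      rw [ZMod.coe_unitOfCoprime, ZMod.val_natCast, hdecomp, Nat.mod_eq_of_lt (ZMod.val_lt _)]
  rw [hcard]
  obtain ⟨s, hs⟩ := hpodd
  obtain ⟨t, ht⟩ := hqodd
  have hBeq : (N - 1) / 2 = 2 * (s * t) + s + t := by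
    have h2 : N = 4 * (s * t) + 2 * s + 2 * t + 1 := by rw [hNq, hs, ht]; ring
    omega
  have hfilter : (Finset.range p).filter (fun j => v + j * q ≤ (N - 1) / 2)
      = Finset.range ((p - 1) / 2 + (if v ≤ (q - 1) / 2 then 1 else 0)) := by
    ext j
    simp only [Finset.mem_filter, Finset.mem_range]
    have hs' : (p - 1) / 2 = s := by omega
    have ht' : (q - 1) / 2 = t := by omega
    rw [hBeq, hs', ht']
    constructor
    · rintro ⟨hjp, hjB⟩
      by_contra hcon
      push_neg at hcon
      split_ifs at hcon with hvt
      · have hj1 : s + 1 ≤ j := by omega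
        have hm : (s + 1) * q ≤ j * q := Nat.mul_le_mul_right q hj1
        rw [ht] at hjB hm
        ring_nf at hjB hm
        linarith
      · push_neg at hvt
        have hj1 : s ≤ j := by omega
        have hm : s * q ≤ j * q := Nat.mul_le_mul_right q hj1
        rw [ht] at hjB hm
        ring_nf at hjB hm
        linarith
    · intro hj
      have hsp : s + 1 ≤ p := by omega
      constructor
      · split_ifs at hj with hvt <;> omega
      · split_ifs at hj with hvt
        · have hj1 : j ≤ s := by omega
          have hm : j * q ≤ s * q := Nat.mul_le_mul_right q hj1
          rw [ht] at hm ⊢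
          ring_nf at hm ⊢
          linarith
        · have hj1 : j + 1 ≤ s := by omega
          have hm : (j + 1) * q ≤ s * q := Nat.mul_le_mul_right q hj1
          rw [ht] at hm ⊢
          have hv2 : v ≤ 2 * t := by omega
          ring_nf at hm ⊢
          linarith
  rw [hfilter, Finset.card_range]

/-- Lemma 7.2.6. Let `p` be an odd prime, `k ≥ 2`, `G₁ = (ℤ/p^kℤ)ˣ`,
`G₂ = (ℤ/p^(k-1)ℤ)ˣ`, `r : G₁ → G₂` the reduction map, and `Φ₁ ⊆ G₁` (resp. `Φ₂ ⊆ G₂`) the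
set of units with least positive residue at most `(p^k - 1)/2` (resp. `(p^(k-1) - 1)/2`).
Then for every `τ ∈ G₂`, in the group ring `ℤ[G₁]`:
`∑_{σ : r σ = τ} ∑_{a ∈ Φ₁} [a⁻¹·σ] = ((p-1)/2)·∑_{σ ∈ G₁} [σ] + ∑_{b ∈ Φ₂} ∑_{σ : r σ = b⁻¹·τ} [σ]`. -/
theorem reflex_norm_group_ring_identity
    (p k : ℕ) (hp : p.Prime) (hodd : Odd p) (hk : 2 ≤ k)
    [NeZero (p ^ k)] [NeZero (p ^ (k - 1))]
    (τ : (ZMod (p ^ (k - 1)))ˣ) :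
    (∑ σ ∈ Finset.univ.filter
        (fun σ : (ZMod (p ^ k))ˣ => ZMod.unitsMap (pow_dvd_pow p (Nat.sub_le k 1)) σ = τ),
      ∑ a ∈ Finset.univ.filter
        (fun a : (ZMod (p ^ k))ˣ => ((a : ZMod (p ^ k)).val ≤ (p ^ k - 1) / 2)),
        MonoidAlgebra.single (a⁻¹ * σ) (1 : ℤ))
    = ((p - 1) / 2 : ℕ) •
        (∑ σ : (ZMod (p ^ k))ˣ, MonoidAlgebra.single σ (1 : ℤ))
      + ∑ b ∈ Finset.univ.filter
          (fun b : (ZMod (p ^ (k - 1)))ˣ =>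
            ((b : ZMod (p ^ (k - 1))).val ≤ (p ^ (k - 1) - 1) / 2)),
        ∑ σ ∈ Finset.univ.filter
          (fun σ : (ZMod (p ^ k))ˣ =>
            ZMod.unitsMap (pow_dvd_pow p (Nat.sub_le k 1)) σ = b⁻¹ * τ),
          MonoidAlgebra.single σ (1 : ℤ) := by
  classical
  have hp2 : p ≠ 2 := by rintro rfl; rw [Nat.odd_iff] at hodd; omega
  have hp3 : 3 ≤ p := by have := hp.two_le; omega
  have hd : p ^ (k - 1) ∣ p ^ k := pow_dvd_pow p (Nat.sub_le k 1)
  set R : (ZMod (p ^ k))ˣ →* (ZMod (p ^ (k - 1)))ˣ :=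
    ZMod.unitsMap (pow_dvd_pow p (Nat.sub_le k 1)) with hR
  have hNq : p ^ k = p ^ (k - 1) * p := by rw [← pow_succ]; congr 1; omega
  have hq1 : 1 < p ^ (k - 1) := by
    have : p ≤ p ^ (k - 1) := Nat.le_self_pow (by omega) p
    omega
  have hqodd : Odd (p ^ (k - 1)) := hodd.pow
  have hpq : p ∣ p ^ (k - 1) := dvd_pow_self p (by omega)
  have hco : ∀ (c : (ZMod (p ^ (k - 1)))ˣ) (j : ℕ),
      Nat.Coprime ((c : ZMod (p ^ (k - 1))).val + j * p ^ (k - 1)) (p ^ k) := by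
    intro c j
    have hcq : Nat.Coprime (c : ZMod (p ^ (k - 1))).val (p ^ (k - 1)) :=
      ZMod.val_coe_unit_coprime c
    have hcp : Nat.Coprime (c : ZMod (p ^ (k - 1))).val p := hcq.coprime_dvd_right hpq
    have hgen : ∀ v : ℕ, Nat.Coprime v p → Nat.Coprime (v + j * p ^ (k - 1)) p := by
      obtain ⟨m, hm⟩ := hpq
      intro v hv
      rw [hm, show v + j * (p * m) = v + p * (j * m) by ring]
      exact (Nat.coprime_add_mul_left_left v p (j * m)).2 hv
    exact (hgen _ hcp).pow_right k
  -- common right-hand form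
  have key : ∀ c : (ZMod (p ^ (k - 1)))ˣ,
      (Finset.univ.filter (fun a : (ZMod (p ^ k))ˣ =>
        ((a : ZMod (p ^ k)).val ≤ (p ^ k - 1) / 2) ∧ R a = c)).card
      = (p - 1) / 2 +
        (if ((c : ZMod (p ^ (k - 1))).val ≤ (p ^ (k - 1) - 1) / 2) then 1 else 0) :=
    fun c => fiber_count' (p ^ k) (p ^ (k - 1)) p hNq hq1 hp3 hodd hqodd
      (pow_dvd_pow p (Nat.sub_le k 1)) c (hco c)
  have lhs_eq : (∑ σ ∈ Finset.univ.filter (fun σ : (ZMod (p ^ k))ˣ => R σ = τ),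
      ∑ a ∈ Finset.univ.filter
        (fun a : (ZMod (p ^ k))ˣ => ((a : ZMod (p ^ k)).val ≤ (p ^ k - 1) / 2)),
        MonoidAlgebra.single (a⁻¹ * σ) (1 : ℤ))
      = ∑ c : (ZMod (p ^ (k - 1)))ˣ,
          ((p - 1) / 2 +
            (if ((c : ZMod (p ^ (k - 1))).val ≤ (p ^ (k - 1) - 1) / 2) then 1 else 0)) •
          (∑ σ ∈ Finset.univ.filter (fun σ : (ZMod (p ^ k))ˣ => R σ = c⁻¹ * τ),
            MonoidAlgebra.single σ (1 : ℤ)) := by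
    rw [Finset.sum_comm]
    have step1 : ∀ a : (ZMod (p ^ k))ˣ,
        (∑ σ ∈ Finset.univ.filter (fun σ : (ZMod (p ^ k))ˣ => R σ = τ),
          MonoidAlgebra.single (a⁻¹ * σ) (1 : ℤ))
        = ∑ g ∈ Finset.univ.filter (fun g : (ZMod (p ^ k))ˣ => R g = (R a)⁻¹ * τ),
          MonoidAlgebra.single g (1 : ℤ) := by
      intro a
      apply Finset.sum_nbij' (fun σ => a⁻¹ * σ) (fun g => a * g)
      · intro σ hσ
        simp only [Finset.mem_filter, Finset.mem_univ, true_and] at hσ ⊢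
        rw [map_mul, map_inv, hσ]
      · intro g hg
        simp only [Finset.mem_filter, Finset.mem_univ, true_and] at hg ⊢
        rw [map_mul, hg]
        group
      · intro σ _; group
      · intro g _; group
      · intro σ _; rfl
    calc (∑ a ∈ Finset.univ.filter
            (fun a : (ZMod (p ^ k))ˣ => ((a : ZMod (p ^ k)).val ≤ (p ^ k - 1) / 2)),
          ∑ σ ∈ Finset.univ.filter (fun σ : (ZMod (p ^ k))ˣ => R σ = τ),
            MonoidAlgebra.single (a⁻¹ * σ) (1 : ℤ))
        = ∑ a ∈ Finset.univ.filter
            (fun a : (ZMod (p ^ k))ˣ => ((a : ZMod (p ^ k)).val ≤ (p ^ k - 1) / 2)),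
          ∑ g ∈ Finset.univ.filter (fun g : (ZMod (p ^ k))ˣ => R g = (R a)⁻¹ * τ),
            MonoidAlgebra.single g (1 : ℤ) := Finset.sum_congr rfl fun a _ => step1 a
      _ = ∑ c : (ZMod (p ^ (k - 1)))ˣ,
          ∑ a ∈ (Finset.univ.filter
            (fun a : (ZMod (p ^ k))ˣ =>
              ((a : ZMod (p ^ k)).val ≤ (p ^ k - 1) / 2))).filter (fun a => R a = c),
          ∑ g ∈ Finset.univ.filter (fun g : (ZMod (p ^ k))ˣ => R g = (R a)⁻¹ * τ),
            MonoidAlgebra.single g (1 : ℤ) := by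
          rw [Finset.sum_fiberwise]
      _ = _ := by
          refine Finset.sum_congr rfl fun c _ => ?_
          rw [Finset.sum_congr rfl (g := fun a =>
              ∑ g ∈ Finset.univ.filter (fun g : (ZMod (p ^ k))ˣ => R g = c⁻¹ * τ),
                MonoidAlgebra.single g (1 : ℤ)) (fun a ha => by
            simp only [Finset.mem_filter] at ha
            rw [ha.2]),
            Finset.sum_const, Finset.filter_filter, key c]
  have rhs1 : (∑ σ : (ZMod (p ^ k))ˣ, MonoidAlgebra.single σ (1 : ℤ))
      = ∑ c : (ZMod (p ^ (k - 1)))ˣ,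
          ∑ σ ∈ Finset.univ.filter (fun σ : (ZMod (p ^ k))ˣ => R σ = c⁻¹ * τ),
            MonoidAlgebra.single σ (1 : ℤ) := by
    rw [← Finset.sum_fiberwise Finset.univ (fun σ : (ZMod (p ^ k))ˣ => τ * (R σ)⁻¹)
      (fun σ => MonoidAlgebra.single σ (1 : ℤ))]
    refine Finset.sum_congr rfl fun c _ => ?_
    refine Finset.sum_congr ?_ fun _ _ => rfl
    apply Finset.filter_congr
    intro σ _
    constructor
    · rintro rfl; group
    · intro h; rw [h]; group
  have rhs2 : (∑ b ∈ Finset.univ.filter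
          (fun b : (ZMod (p ^ (k - 1)))ˣ =>
            ((b : ZMod (p ^ (k - 1))).val ≤ (p ^ (k - 1) - 1) / 2)),
        ∑ σ ∈ Finset.univ.filter (fun σ : (ZMod (p ^ k))ˣ => R σ = b⁻¹ * τ),
          MonoidAlgebra.single σ (1 : ℤ))
      = ∑ c : (ZMod (p ^ (k - 1)))ˣ,
          (if ((c : ZMod (p ^ (k - 1))).val ≤ (p ^ (k - 1) - 1) / 2) then 1 else 0 : ℕ) •
          (∑ σ ∈ Finset.univ.filter (fun σ : (ZMod (p ^ k))ˣ => R σ = c⁻¹ * τ),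
            MonoidAlgebra.single σ (1 : ℤ)) := by
    rw [Finset.sum_filter]
    refine Finset.sum_congr rfl fun c _ => ?_
    split_ifs with h
    · rw [one_smul]
    · rw [zero_smul]
  rw [lhs_eq, rhs1, rhs2, Finset.smul_sum, ← Finset.sum_add_distrib]
  refine Finset.sum_congr rfl fun c _ => ?_
  rw [add_smul]
end

section
/- Let p be an odd prime, k ≥ 2, m = p^k, and let a be an integer with 1 ≤ a ≤ m − 1 and p | a; write a' = a/p. Let T = {a' + j·p^{k−1} : 0 ≤ j ≤ p − 1}, a set of p integers contained in {1, …, m − 1}, and let B, C be any partition of T with #B = (p−1)/2 and #C = (p+1)/2. Then the complex number Γ(f_a) = Γ(a/m)²·Γ([−2a]/m) · ∏_{b ∈ B} Γ((m−b)/m)²·Γ([2b]/m) / ∏_{c ∈ C} Γ(c/m)²·Γ([−2c]/m) belongs to ℚ(ζ_m)^×·π^ℤ; that is, there exist an integer N and a nonzero element w of the subfield ℚ(ζ_m) of ℂ such that Γ(f_a) = w·π^N. (Since √((−1)^{(p−1)/2}·p) lies in ℚ(ζ_p) ⊆ ℚ(ζ_m), this is the congruence Γ(f_a) ≡ √((−1)^{(p−1)/2}·p)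 modulo ℚ(ζ_m)^×·⟨π⟩ established in the proof of Theorem 7.2.12.) -/
/-- For `x : ℤ` not divisible by `m`, `repZ m x ∈ {1, …, m-1}` is the representative of
`x` modulo `m` (in general it is the representative in `{0, …, m-1}`). -/
def repZ (m : ℕ) (x : ℤ) : ℕ := (x % (m : ℤ)).toNat

/-!
The reflection formula `Γ(x) Γ(1 - x) = π / sin (π x)` trades every `Γ((m - t)/m)` occurring in
`Γ(f_a)` for `π / (sin (π t / m) Γ(t / m))`. Write `μ = p^(k-1)` and `r = 2a' mod μ`. As
`t = a' + jμ` runs over `T`, the residues `[2t]` run over `r + iμ` (`2` is invertible mod `p`), so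
the two products `∏_T Γ(t/m)` and `∏_T Γ([2t]/m)` are both Gauss multiplication products; they
collapse to `Γ(a/m)` and `Γ([2a]/m)` up to one constant `p ∏_{j=1}^p Γ(j/p)` and powers of `p`,
and reflection once more evaluates that constant as `p π^((p-1)/2)` over a product of sines. All powers
of `π` cancel, leaving a rational number times a quotient of two products of equally many values
`sin (π t / m)`. Since `2i sin (π t / m) = η^(-t) - η^t` with `η = e^(π i / m) = -ζ_m^((m+1)/2)`,
such a quotient lies in `ℚ(ζ_m)`.
-/

open Real Finset

theorem convexOn_sum {ι : Type*} {s : Set ℝ} (hs : Convex ℝ s) (t : Finset ι) {f : ι → ℝ → ℝ}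
    (hf : ∀ i ∈ t, ConvexOn ℝ s (f i)) : ConvexOn ℝ s fun x => ∑ i ∈ t, f i x := by
  classical
  induction t using Finset.induction_on with
  | empty => simpa using convexOn_const 0 hs
  | insert i t hi ih =>
    simp only [sum_insert hi]
    exact (hf i (mem_insert_self i t)).add (ih fun j hj => hf j (mem_insert_of_mem hj))

theorem Finset.prod_range_mod_mul_add {M : Type*} [CommMonoid M] {p c : ℕ}
    (hc : Nat.Coprime c p) (e : ℕ) (F : ℕ → M) :
    ∏ j ∈ range p, F ((c * j + e) % p) = ∏ i ∈ range p, F i := by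
  have hmaps : ∀ j ∈ range p, (c * j + e) % p ∈ range p := fun j hj =>
    mem_range.mpr (Nat.mod_lt _ (Nat.zero_lt_of_lt (mem_range.mp hj)))
  have hinj : Set.InjOn (fun j => (c * j + e) % p) (range p) := fun x hx y hy hxy =>
    ((Nat.ModEq.add_right_cancel' e hxy).cancel_left_of_coprime
      (Nat.coprime_comm.mp hc)).eq_of_lt_of_lt (mem_range.mp hx) (mem_range.mp hy)
  exact prod_nbij _ hmaps hinj (surjOn_of_injOn_of_card_le _ hmaps hinj le_rfl) fun _ _ => rfl

namespace Real

theorem eq_mul_Gamma_of_log_convex {g : ℝ → ℝ} (hconv : ConvexOn ℝ (Set.Ioi 0) (log ∘ g))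
    (hfeq : ∀ {y : ℝ}, 0 < y → g (y + 1) = y * g y) (hpos : ∀ {y : ℝ}, 0 < y → 0 < g y)
    {x : ℝ} (hx : 0 < x) : g x = g 1 * Gamma x := by
  have hg1 : g 1 ≠ 0 := (hpos one_pos).ne'
  have key := eq_Gamma_of_log_convex (f := fun y => g y / g 1) ?_ (fun hy => ?_)
    (fun hy => div_pos (hpos hy) (hpos one_pos)) (div_self hg1) hx
  · rw [← key]
    field_simp
  · refine (hconv.add_const (-log (g 1))).congr fun y hy => ?_
    simp [log_div (hpos hy).ne' hg1, sub_eq_add_neg]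
  · simp only [hfeq hy, mul_div_assoc]

theorem convexOn_log_Gamma_add_div {c n : ℝ} (hc : 0 ≤ c) (hn : 0 < n) :
    ConvexOn ℝ (Set.Ioi 0) fun x => log (Gamma ((x + c) / n)) := by
  refine ⟨convex_Ioi 0, fun x hx y hy α β hα hβ hαβ => ?_⟩
  have hmem : ∀ z ∈ Set.Ioi (0 : ℝ), (z + c) / n ∈ Set.Ioi (0 : ℝ) := fun z hz =>
    div_pos (add_pos_of_pos_of_nonneg hz hc) hn
  have h := convexOn_log_Gamma.2 (hmem x hx) (hmem y hy) hα hβ hαβ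
  have harg : (α • x + β • y + c) / n = α • ((x + c) / n) + β • ((y + c) / n) := by
    simp only [smul_eq_mul]
    field_simp
    linear_combination c * hαβ.symm
  simpa only [harg, Function.comp_apply] using h

theorem prod_Gamma_add_one_add_div {n : ℕ} (hn : 0 < n) {x : ℝ} (hx : 0 < x) :
    ∏ j ∈ range n, Gamma ((x + 1 + j) / n) = x / n * ∏ j ∈ range n, Gamma ((x + j) / n) := by
  have hxn : 0 < x / n := by positivity
  have h := (prod_range_succ' (fun j : ℕ => Gamma ((x + j) / n)) n).symm.trans
    (prod_range_succ _ n)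
  rw [show (x + n) / n = x / n + 1 by field_simp, Gamma_add_one hxn.ne'] at h
  simp only [Nat.cast_add, Nat.cast_one, Nat.cast_zero, add_zero, ← add_assoc] at h
  simp_rw [add_right_comm x 1]
  refine mul_right_cancel₀ (Gamma_pos_of_pos hxn).ne' ?_
  linear_combination h

theorem Gamma_multiplication {n : ℕ} (hn : 0 < n) {x : ℝ} (hx : 0 < x) :
    (n : ℝ) ^ x * ∏ j ∈ range n, Gamma ((x + j) / n) =
      n * (∏ j ∈ range n, Gamma ((j + 1) / n)) * Gamma x := by
  have hn' : (0 : ℝ) < n := by exact_mod_cast hn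
  have hGamma_pos : ∀ {y : ℝ}, 0 < y → ∀ j : ℕ, 0 < Gamma ((y + j) / n) := fun hy j =>
    Gamma_pos_of_pos (by positivity)
  have hconv : ConvexOn ℝ (Set.Ioi 0)
      (log ∘ fun y => (n : ℝ) ^ y * ∏ j ∈ range n, Gamma ((y + j) / n)) := by
    refine (((convexOn_id (convex_Ioi 0)).smul (log_nonneg (Nat.one_le_cast.mpr hn))).add
      (convexOn_sum (convex_Ioi 0) (range n) fun j _ =>
        convexOn_log_Gamma_add_div (Nat.cast_nonneg j) hn')).congr fun y hy => ?_
    simp only [Function.comp_apply, id, smul_eq_mul, Pi.add_apply]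
    rw [log_mul (rpow_pos_of_pos hn' y).ne' (prod_pos fun j _ => hGamma_pos hy j).ne',
      log_rpow hn', log_prod fun j _ => (hGamma_pos hy j).ne', mul_comm]
  convert eq_mul_Gamma_of_log_convex hconv (fun {y} hy => ?_)
    (fun hy => mul_pos (rpow_pos_of_pos hn' _) (prod_pos fun j _ => hGamma_pos hy j)) hx using 2
  · simp [add_comm]
  · rw [rpow_add_one hn'.ne', prod_Gamma_add_one_add_div hn hy]
    field_simp

theorem prod_Gamma_mul_prod_sin {n h : ℕ} (hn : n = 2 * h + 1) :
    (∏ j ∈ range n, Gamma ((j + 1) / n)) * ∏ j ∈ range h, sin (π * (j + 1) / n) = π ^ h := by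
  have hn0 : (0 : ℝ) < n := by rw [hn]; positivity
  -- the factors `j` and `2h - 1 - j` of the first product combine to `Γ(x) Γ(1 - x)`
  have hpair : ∀ j ∈ range h, Gamma ((j + 1) / n) * Gamma ((↑(h + (h - 1 - j)) + 1) / n) *
      sin (π * (j + 1) / n) = π := by
    intro j hj
    have hjh : j < h := mem_range.mp hj
    have hsum : (↑(h + (h - 1 - j)) + 1 : ℝ) + (j + 1) = n := by
      exact_mod_cast (by omega : h + (h - 1 - j) + 1 + (j + 1) = n)
    have hx1 : (j + 1 : ℝ) / n < 1 := by
      rw [div_lt_one hn0]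
      exact_mod_cast (by omega : j + 1 < n)
    have hsin : sin (π * (j + 1) / n) ≠ 0 := by
      rw [mul_div_assoc]
      exact (sin_pos_of_pos_of_lt_pi (by positivity) (by nlinarith [pi_pos])).ne'
    rw [show (↑(h + (h - 1 - j)) + 1 : ℝ) / n = 1 - (j + 1) / n by
      rw [eq_sub_iff_add_eq, ← add_div, hsum, div_self hn0.ne'],
      Gamma_mul_Gamma_one_sub, ← mul_div_assoc, div_mul_cancel₀ π hsin]
  have hsplit : ∏ j ∈ range n, Gamma ((j + 1) / n) = (∏ j ∈ range h, Gamma ((j + 1) / n)) *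
      (∏ j ∈ range h, Gamma ((↑(h + j) + 1) / n)) * Gamma ((↑(h + h) + 1) / n) := by
    rw [hn, prod_range_succ, two_mul, prod_range_add]
  rw [hsplit, show ((h + h : ℕ) + 1 : ℝ) / n = 1 by
      rw [div_eq_one_iff_eq hn0.ne', hn]; push_cast; ring, Gamma_one, mul_one,
    ← prod_range_reflect (fun j => Gamma ((↑(h + j) + 1) / n)) h, ← prod_mul_distrib,
    ← prod_mul_distrib, prod_congr rfl hpair, prod_const, card_range]

end Real

theorem exp_pi_mul_I_div_mem_adjoin {m : ℕ} (hm : Odd m) :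
    Complex.exp (π * Complex.I / m) ∈
      IntermediateField.adjoin ℚ {Complex.exp (2 * π * Complex.I / m)} := by
  obtain ⟨t, rfl⟩ := hm
  have hm0 : ((2 * t + 1 : ℕ) : ℂ) ≠ 0 := Nat.cast_ne_zero.mpr (Nat.succ_ne_zero _)
  have hζ : Complex.exp (π * Complex.I / ↑(2 * t + 1)) =
      -Complex.exp (2 * π * Complex.I / ↑(2 * t + 1)) ^ (t + 1) := by
    rw [← Complex.exp_nat_mul, show ((t + 1 : ℕ) : ℂ) * (2 * π * Complex.I / ↑(2 * t + 1)) =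
      π * Complex.I + π * Complex.I / ↑(2 * t + 1) by field_simp; push_cast; ring,
      Complex.exp_add, Complex.exp_pi_mul_I, neg_one_mul, neg_neg]
  rw [hζ]
  exact neg_mem (pow_mem (IntermediateField.mem_adjoin_simple_self ℚ _) _)

theorem algebra_adjoin_exp_eq_toSubalgebra {m : ℕ} (hm : m ≠ 0) :
    Algebra.adjoin ℚ {Complex.exp (2 * π * Complex.I / m)} =
      (IntermediateField.adjoin ℚ {Complex.exp (2 * π * Complex.I / m)}).toSubalgebra :=
  (IntermediateField.adjoin_simple_toSubalgebra_of_isAlgebraic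
    ((Complex.isPrimitiveRoot_exp m hm).isIntegral
      (Nat.pos_of_ne_zero hm)).tower_top.isAlgebraic).symm

noncomputable section

def gammaFrac (m t : ℕ) : ℝ := Gamma (t / m)

def sinFrac (m t : ℕ) : ℝ := sin (π * t / m)

theorem gammaFrac_pos {m t : ℕ} (hm : 0 < m) (ht : 0 < t) : 0 < gammaFrac m t :=
  Gamma_pos_of_pos (by positivity)

theorem sinFrac_pos {m t : ℕ} (ht : 0 < t) (htm : t < m) : 0 < sinFrac m t := by
  have hm : (0 : ℝ) < m := by exact_mod_cast ht.trans htm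
  have htm' : (t : ℝ) / m < 1 := (div_lt_one hm).mpr (by exact_mod_cast htm)
  rw [sinFrac, mul_div_assoc]
  exact sin_pos_of_pos_of_lt_pi (by positivity) (by nlinarith [pi_pos])

theorem gammaFrac_sub {m t : ℕ} (hm : 0 < m) (ht : 0 < t) (htm : t ≤ m) :
    gammaFrac m (m - t) = π / (sinFrac m t * gammaFrac m t) := by
  rw [← div_div, eq_div_iff (gammaFrac_pos hm ht).ne', gammaFrac, gammaFrac, sinFrac,
    Nat.cast_sub htm, sub_div, div_self (by positivity), mul_comm, Gamma_mul_Gamma_one_sub,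
    mul_div_assoc]

theorem rpow_mul_prod_gammaFrac {p μ s : ℕ} (hp : 0 < p) (hμ : 0 < μ) (hs : 0 < s) :
    (p : ℝ) ^ ((s : ℝ) / μ) * ∏ j ∈ range p, gammaFrac (μ * p) (s + j * μ) =
      p * (∏ j ∈ range p, Gamma ((j + 1) / p)) * gammaFrac (μ * p) (p * s) := by
  have hμ' : (0 : ℝ) < μ := by exact_mod_cast hμ
  have hp' : (0 : ℝ) < p := by exact_mod_cast hp
  convert Gamma_multiplication hp (x := (s : ℝ) / μ) (by positivity) using 3 <;>
  · rw [gammaFrac]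
    push_cast
    congr 1
    field_simp

theorem ofReal_sinFrac (m t : ℕ) : (sinFrac m t : ℂ) =
    ((Complex.exp (π * Complex.I / m) ^ t)⁻¹ - Complex.exp (π * Complex.I / m) ^ t) *
      (Complex.I / 2) := by
  have h : Complex.exp (π * Complex.I / m) ^ t = Complex.exp (↑(π * t / m) * Complex.I) := by
    rw [← Complex.exp_nat_mul]; push_cast; ring_nf
  rw [sinFrac, Complex.ofReal_sin, Complex.sin, h, ← Complex.exp_neg, neg_mul, mul_div_assoc]

theorem ofReal_prod_sinFrac_div_mem {F : IntermediateField ℚ ℂ} {m : ℕ}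
    (hη : Complex.exp (π * Complex.I / m) ∈ F) {s t : Multiset ℕ}
    (hst : Multiset.card s = Multiset.card t) :
    (((s.map (sinFrac m)).prod / (t.map (sinFrac m)).prod : ℝ) : ℂ) ∈ F := by
  set u : ℕ → ℂ := fun x => (Complex.exp (π * Complex.I / m) ^ x)⁻¹ -
    Complex.exp (π * Complex.I / m) ^ x
  have hprod : ∀ M : Multiset ℕ, ((M.map (sinFrac m)).prod : ℂ) =
      (M.map u).prod * (Complex.I / 2) ^ Multiset.card M := by
    intro M
    rw [← Complex.ofRealHom_eq_coe, map_multiset_prod, Multiset.map_map]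
    simp [ofReal_sinFrac, Multiset.prod_map_mul, u]
  have hu : ∀ M : Multiset ℕ, (M.map u).prod ∈ F := fun M => multiset_prod_mem _ fun z hz => by
    obtain ⟨x, -, rfl⟩ := Multiset.mem_map.mp hz
    exact sub_mem (inv_mem (pow_mem hη x)) (pow_mem hη x)
  rw [Complex.ofReal_div, hprod, hprod, hst,
    mul_div_mul_right _ _ (pow_ne_zero _ (by simp [Complex.I_ne_zero]))]
  exact div_mem (hu s) (hu t)

theorem repZ_natCast (m x : ℕ) : repZ m x = x % m := by
  rw [repZ, ← Int.natCast_mod, Int.toNat_natCast]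

theorem repZ_neg_natCast {m x : ℕ} (h : x % m ≠ 0) : repZ m (-x) = m - x % m := by
  have hdvd : ¬ (m : ℤ) ∣ x := by
    exact_mod_cast fun hd => h (Nat.mod_eq_zero_of_dvd hd)
  rcases Nat.eq_zero_or_pos m with rfl | hm
  · simp [repZ]
  have hlt : x % m < m := Nat.mod_lt _ hm
  rw [repZ, Int.neg_emod, if_neg hdvd, Int.natAbs_natCast, ← Int.natCast_mod]
  omega

/-- `Γ(f_a)` as a real number, the representative `[x]` of `x` being `x % m` and that of `-x`
being `m - x % m`. -/
def gammaValue (m a : ℕ) (B C : Finset ℕ) : ℝ :=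
  gammaFrac m a ^ 2 * gammaFrac m (m - 2 * a % m) *
      (∏ b ∈ B, gammaFrac m (m - b) ^ 2 * gammaFrac m (2 * b % m)) /
    ∏ c ∈ C, gammaFrac m c ^ 2 * gammaFrac m (m - 2 * c % m)

theorem ofReal_gammaValue {m a : ℕ} {B C : Finset ℕ} (ha : 2 * a % m ≠ 0)
    (hC : ∀ c ∈ C, 2 * c % m ≠ 0) :
    (gammaValue m a B C : ℂ) =
      Complex.Gamma ((a : ℂ) / (m : ℂ)) ^ 2 *
          Complex.Gamma ((repZ m (-2 * (a : ℤ)) : ℂ) / (m : ℂ)) *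
          (∏ b ∈ B, Complex.Gamma (((m - b : ℕ) : ℂ) / (m : ℂ)) ^ 2 *
            Complex.Gamma ((repZ m (2 * (b : ℤ)) : ℂ) / (m : ℂ))) /
          (∏ c ∈ C, Complex.Gamma ((c : ℂ) / (m : ℂ)) ^ 2 *
            Complex.Gamma ((repZ m (-2 * (c : ℤ)) : ℂ) / (m : ℂ))) := by
  have hΓ : ∀ t : ℕ, Complex.Gamma ((t : ℂ) / (m : ℂ)) = gammaFrac m t := fun t => by
    rw [gammaFrac, ← Complex.Gamma_ofReal]
    push_cast
    rfl
  have hrep : ∀ x : ℕ, repZ m (2 * (x : ℤ)) = 2 * x % m := fun x => by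
    rw [← repZ_natCast]
    push_cast
    rfl
  have hrep_neg : ∀ x : ℕ, 2 * x % m ≠ 0 → repZ m (-2 * (x : ℤ)) = m - 2 * x % m :=
    fun x hx => by
      rw [← repZ_neg_natCast hx]
      push_cast
      ring_nf
  simp only [gammaValue, hΓ, hrep, Complex.ofReal_div, Complex.ofReal_mul, Complex.ofReal_pow,
    Complex.ofReal_prod]
  rw [hrep_neg a ha]
  congr 1
  exact prod_congr rfl fun c hc => by rw [hrep_neg c (hC c hc)]

theorem gammaValue_pos {m a : ℕ} {B C : Finset ℕ} (hm : 0 < m) (ha : 0 < a)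
    (hB : ∀ b ∈ B, b < m ∧ 2 * b % m ≠ 0) (hC : ∀ c ∈ C, 0 < c) : 0 < gammaValue m a B C := by
  have hG := fun {t : ℕ} (ht : 0 < t) => gammaFrac_pos hm ht
  have hsub : ∀ x : ℕ, 0 < m - 2 * x % m := fun x => Nat.sub_pos_of_lt (Nat.mod_lt _ hm)
  refine div_pos (mul_pos (mul_pos (pow_pos (hG ha) 2) (hG (hsub a))) (prod_pos fun b hb => ?_))
    (prod_pos fun c hc => mul_pos (pow_pos (hG (hC c hc)) 2) (hG (hsub c)))
  exact mul_pos (pow_pos (hG (Nat.sub_pos_of_lt (hB b hb).1)) 2)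
    (hG (Nat.pos_of_ne_zero (hB b hb).2))

theorem gammaValue_eq_of_reflection {m a : ℕ} {B C : Finset ℕ} (hm : 0 < m)
    (hC : C.card = B.card + 1) (ha : 2 * a % m ≠ 0)
    (hBC : ∀ t ∈ B ∪ C, 0 < t ∧ t < m ∧ 2 * t % m ≠ 0) :
    gammaValue m a B C =
      gammaFrac m a ^ 2 / ((∏ b ∈ B, gammaFrac m b) * ∏ c ∈ C, gammaFrac m c) ^ 2 *
        ((∏ b ∈ B, gammaFrac m (2 * b % m)) * (∏ c ∈ C, gammaFrac m (2 * c % m)) /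
          gammaFrac m (2 * a % m)) *
        (π ^ B.card * (∏ c ∈ C, sinFrac m (2 * c % m)) /
          (sinFrac m (2 * a % m) * (∏ b ∈ B, sinFrac m b) ^ 2)) := by
  have hmod : ∀ x, 2 * x % m ≠ 0 → 0 < 2 * x % m ∧ 2 * x % m < m := fun x hx =>
    ⟨Nat.pos_of_ne_zero hx, Nat.mod_lt _ hm⟩
  have hB' : ∀ b ∈ B, 0 < b ∧ b < m ∧ 2 * b % m ≠ 0 := fun b hb => hBC b (mem_union_left C hb)
  have hC' : ∀ c ∈ C, 0 < c ∧ c < m ∧ 2 * c % m ≠ 0 := fun c hc => hBC c (mem_union_right B hc)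
  have hGB : ∏ b ∈ B, gammaFrac m b ≠ 0 :=
    (prod_pos fun b hb => gammaFrac_pos hm (hB' b hb).1).ne'
  have hGC : ∏ c ∈ C, gammaFrac m c ≠ 0 :=
    (prod_pos fun c hc => gammaFrac_pos hm (hC' c hc).1).ne'
  have hGσC : ∏ c ∈ C, gammaFrac m (2 * c % m) ≠ 0 :=
    (prod_pos fun c hc => gammaFrac_pos hm (hmod c (hC' c hc).2.2).1).ne'
  have hSB : ∏ b ∈ B, sinFrac m b ≠ 0 :=
    (prod_pos fun b hb => sinFrac_pos (hB' b hb).1 (hB' b hb).2.1).ne'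
  have hSσC : ∏ c ∈ C, sinFrac m (2 * c % m) ≠ 0 :=
    (prod_pos fun c hc => sinFrac_pos (hmod c (hC' c hc).2.2).1 (hmod c (hC' c hc).2.2).2).ne'
  have hGσa := (gammaFrac_pos hm (hmod a ha).1).ne'
  have hSσa := (sinFrac_pos (hmod a ha).1 (hmod a ha).2).ne'
  rw [gammaValue, gammaFrac_sub hm (hmod a ha).1 (hmod a ha).2.le,
    prod_congr (s₁ := B) rfl fun b hb => by rw [gammaFrac_sub hm (hB' b hb).1 (hB' b hb).2.1.le],
    prod_congr (s₁ := C) rfl fun c hc => by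
      rw [gammaFrac_sub hm (hmod c (hC' c hc).2.2).1 (hmod c (hC' c hc).2.2).2.le]]
  simp only [prod_mul_distrib, prod_div_distrib, prod_pow, prod_const, hC]
  field_simp
  ring

section

variable {p q μ a' : ℕ} {B C : Finset ℕ}

theorem two_mul_add_mul_mod (hμ : 0 < μ) (j : ℕ) :
    2 * (a' + j * μ) % (μ * p) = 2 * a' % μ + (2 * j + 2 * a' / μ) % p * μ := by
  rw [Nat.mod_mul, mul_add, ← mul_assoc, Nat.add_mul_mod_self_right,
    Nat.add_mul_div_right _ _ hμ, add_comm (2 * a' / μ), mul_comm μ]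

theorem two_mul_mul_mod : 2 * (p * a') % (μ * p) = p * (2 * a' % μ) := by
  rw [mul_left_comm, mul_comm μ, Nat.mul_mod_mul_left]

theorem two_mul_mod_pos (hμ : Odd μ) (ha' : 0 < a') (ha'μ : a' < μ) : 0 < 2 * a' % μ :=
  Nat.pos_of_ne_zero fun h => absurd (Nat.le_of_dvd ha'
    (hμ.coprime_two_right.dvd_of_dvd_mul_left (Nat.dvd_of_mod_eq_zero h))) (by omega)

theorem pos_lt_two_mul_mod_ne_zero_of_mem_image (hμ : Odd μ) (ha' : 0 < a') (ha'μ : a' < μ)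
    {t : ℕ} (ht : t ∈ (range p).image fun j => a' + j * μ) :
    0 < t ∧ t < μ * p ∧ 2 * t % (μ * p) ≠ 0 := by
  obtain ⟨j, hj, rfl⟩ := mem_image.mp ht
  refine ⟨by omega, ?_, ?_⟩
  · rw [mul_comm j]
    exact Nat.add_mul_lt_mul_of_lt_of_lt ha'μ (mem_range.mp hj)
  · rw [two_mul_add_mul_mod hμ.pos]
    have := two_mul_mod_pos hμ ha' ha'μ
    omega

theorem prod_mul_prod_eq_prod_range (hμ : 0 < μ)
    (hBC : B ∪ C = (range p).image fun j => a' + j * μ) (hdisj : Disjoint B C) (F : ℕ → ℝ) :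
    (∏ b ∈ B, F b) * ∏ c ∈ C, F c = ∏ j ∈ range p, F (a' + j * μ) := by
  rw [← prod_union hdisj, hBC,
    prod_image fun x _ y _ h => Nat.eq_of_mul_eq_mul_right hμ (by simpa using h)]

theorem prod_mul_prod_two_mul_mod_eq_prod_range (hp : Odd p) (hμ : 0 < μ)
    (hBC : B ∪ C = (range p).image fun j => a' + j * μ) (hdisj : Disjoint B C) (F : ℕ → ℝ) :
    (∏ b ∈ B, F (2 * b % (μ * p))) * ∏ c ∈ C, F (2 * c % (μ * p)) =
      ∏ i ∈ range p, F (2 * a' % μ + i * μ) := by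
  rw [prod_mul_prod_eq_prod_range hμ hBC hdisj fun t => F (2 * t % (μ * p))]
  simp only [two_mul_add_mul_mod hμ]
  exact prod_range_mod_mul_add (Nat.coprime_two_left.mpr hp) _ fun i => F (2 * a' % μ + i * μ)

theorem gammaFrac_sq_div_mul_div (hp : 0 < p) (hμ : 0 < μ) (ha' : 0 < a')
    (hr : 0 < 2 * a' % μ) :
    gammaFrac (μ * p) (p * a') ^ 2 / (∏ j ∈ range p, gammaFrac (μ * p) (a' + j * μ)) ^ 2 *
        ((∏ j ∈ range p, gammaFrac (μ * p) (2 * a' % μ + j * μ)) /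
          gammaFrac (μ * p) (p * (2 * a' % μ))) =
      p ^ (2 * a' / μ) / (p * ∏ j ∈ range p, Gamma ((j + 1) / p)) := by
  set r := 2 * a' % μ
  have hp' : (0 : ℝ) < p := by exact_mod_cast hp
  have hpow : ((p : ℝ) ^ ((a' : ℝ) / μ)) ^ 2 = p ^ (2 * a' / μ) * p ^ ((r : ℝ) / μ) := by
    rw [← rpow_natCast, ← rpow_natCast, ← rpow_mul hp'.le, ← rpow_add hp']
    congr 1
    have h : (μ : ℝ) * (2 * a' / μ : ℕ) + r = 2 * a' := by
      exact_mod_cast Nat.div_add_mod (2 * a') μ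
    field_simp
    linarith
  have hK : 0 < ∏ j ∈ range p, Gamma ((j + 1) / p) :=
    prod_pos fun j _ => Gamma_pos_of_pos (by positivity)
  have hX : 0 < ∏ j ∈ range p, gammaFrac (μ * p) (a' + j * μ) :=
    prod_pos fun j _ => gammaFrac_pos (by positivity) (by omega)
  have hY : 0 < ∏ j ∈ range p, gammaFrac (μ * p) (r + j * μ) :=
    prod_pos fun j _ => gammaFrac_pos (by positivity) (by omega)
  have hG1 : gammaFrac (μ * p) (p * a') = p ^ ((a' : ℝ) / μ) *
      (∏ j ∈ range p, gammaFrac (μ * p) (a' + j * μ)) /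
        (p * ∏ j ∈ range p, Gamma ((j + 1) / p)) := by
    rw [eq_div_iff (mul_pos hp' hK).ne', mul_comm, rpow_mul_prod_gammaFrac hp hμ ha']
  have hG2 : gammaFrac (μ * p) (p * r) = p ^ ((r : ℝ) / μ) *
      (∏ j ∈ range p, gammaFrac (μ * p) (r + j * μ)) /
        (p * ∏ j ∈ range p, Gamma ((j + 1) / p)) := by
    rw [eq_div_iff (mul_pos hp' hK).ne', mul_comm, rpow_mul_prod_gammaFrac hp hμ hr]
  rw [hG1, hG2, div_pow, mul_pow, hpow]
  field_simp

theorem gammaValue_eq (hpq : p = 2 * q + 1) (hμ : Odd μ)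
    (ha' : 0 < a') (ha'μ : a' < μ)
    (hBC : B ∪ C = (range p).image fun j => a' + j * μ) (hdisj : Disjoint B C)
    (hB : B.card = q) (hC : C.card = q + 1) :
    gammaValue (μ * p) (p * a') B C =
      (p : ℝ) ^ (2 * a' / μ) / p *
        ((∏ j ∈ range q, sinFrac (μ * p) ((j + 1) * μ)) *
          ∏ c ∈ C, sinFrac (μ * p) (2 * c % (μ * p))) /
        (sinFrac (μ * p) (2 * (p * a') % (μ * p)) * (∏ b ∈ B, sinFrac (μ * p) b) ^ 2) := by
  have hp : 0 < p := by omega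
  have hμ0 : 0 < μ := hμ.pos
  have hr := two_mul_mod_pos hμ ha' ha'μ
  have hT : ∀ t ∈ B ∪ C, 0 < t ∧ t < μ * p ∧ 2 * t % (μ * p) ≠ 0 := fun t ht =>
    pos_lt_two_mul_mod_ne_zero_of_mem_image hμ ha' ha'μ (hBC ▸ ht)
  have hS0 : ∏ j ∈ range q, sinFrac (μ * p) ((j + 1) * μ) =
      ∏ j ∈ range q, sin (π * (j + 1) / p) :=
    prod_congr rfl fun j _ => by
      have : (μ : ℝ) ≠ 0 := by exact_mod_cast hμ0.ne'
      rw [sinFrac]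
      push_cast
      congr 1
      field_simp
  have hSB : 0 < ∏ b ∈ B, sinFrac (μ * p) b := prod_pos fun b hb =>
    sinFrac_pos (hT b (mem_union_left C hb)).1 (hT b (mem_union_left C hb)).2.1
  have hSa : 0 < sinFrac (μ * p) (p * (2 * a' % μ)) :=
    sinFrac_pos (Nat.mul_pos hp hr) (two_mul_mul_mod ▸ Nat.mod_lt _ (by positivity))
  have hp' : (0 : ℝ) < p := by exact_mod_cast hp
  have hK : 0 < ∏ j ∈ range p, Gamma ((j + 1) / p) :=
    prod_pos fun j _ => Gamma_pos_of_pos (by positivity)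
  rw [gammaValue_eq_of_reflection (by positivity) (by omega)
      (by rw [two_mul_mul_mod]; exact (Nat.mul_pos hp hr).ne') hT,
    prod_mul_prod_eq_prod_range hμ0 hBC hdisj,
    prod_mul_prod_two_mul_mod_eq_prod_range (hpq ▸ odd_two_mul_add_one q) hμ0 hBC hdisj,
    two_mul_mul_mod, gammaFrac_sq_div_mul_div hp hμ0 ha' hr, hB, ← prod_Gamma_mul_prod_sin hpq,
    ← hS0]
  field_simp

theorem ofReal_gammaValue_mem_adjoin (hpq : p = 2 * q + 1)
    (hμ : Odd μ) (ha' : 0 < a') (ha'μ : a' < μ)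
    (hBC : B ∪ C = (range p).image fun j => a' + j * μ) (hdisj : Disjoint B C)
    (hB : B.card = q) (hC : C.card = q + 1) :
    (gammaValue (μ * p) (p * a') B C : ℂ) ∈
      IntermediateField.adjoin ℚ {Complex.exp (2 * π * Complex.I / ((μ * p : ℕ) : ℂ))} := by
  have hη := exp_pi_mul_I_div_mem_adjoin (hμ.mul (hpq ▸ odd_two_mul_add_one q))
  rw [gammaValue_eq hpq hμ ha' ha'μ hBC hdisj hB hC]
  set num := (range q).val.map (fun j => (j + 1) * μ) + C.val.map fun c => 2 * c % (μ * p)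
  set den := 2 * (p * a') % (μ * p) ::ₘ (B.val + B.val)
  have hnum : (∏ j ∈ range q, sinFrac (μ * p) ((j + 1) * μ)) *
      ∏ c ∈ C, sinFrac (μ * p) (2 * c % (μ * p)) = (num.map (sinFrac (μ * p))).prod := by
    simp only [num, Multiset.map_add, Multiset.prod_add, Multiset.map_map, Function.comp_def,
      prod_eq_multiset_prod]
  have hden : sinFrac (μ * p) (2 * (p * a') % (μ * p)) * (∏ b ∈ B, sinFrac (μ * p) b) ^ 2 =
      (den.map (sinFrac (μ * p))).prod := by
    simp only [den, Multiset.map_cons, Multiset.prod_cons, Multiset.map_add, Multiset.prod_add,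
      prod_eq_multiset_prod, sq]
  rw [hnum, hden, mul_div_assoc ((p : ℝ) ^ (2 * a' / μ) / p), Complex.ofReal_mul]
  refine mul_mem ?_ (ofReal_prod_sinFrac_div_mem hη ?_)
  · rw [show (((p : ℝ) ^ (2 * a' / μ) / p : ℝ) : ℂ) = (((p : ℚ) ^ (2 * a' / μ) / p : ℚ) : ℂ) by
      push_cast; rfl]
    exact SubfieldClass.ratCast_mem _ _
  · simp [num, den, hB, hC]
    ring

end

end

theorem gamma_value_mem_cyclotomic_mul_pi_pow_general
    (p k : ℕ) (hodd : Odd p)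
    (a : ℕ) (ha1 : 1 ≤ a) (ha2 : a ≤ p ^ k - 1) (hpa : p ∣ a)
    (B C : Finset ℕ)
    (hBC : B ∪ C = (Finset.range p).image (fun j => a / p + j * p ^ (k - 1)))
    (hdisj : Disjoint B C)
    (hB : B.card = (p - 1) / 2) (hC : C.card = (p + 1) / 2) :
    ∃ (N : ℤ) (w : ℂ), w ≠ 0 ∧
      w ∈ Algebra.adjoin ℚ
        ({Complex.exp (2 * (Real.pi : ℂ) * Complex.I / ((p ^ k : ℕ) : ℂ))} : Set ℂ) ∧
      Complex.Gamma ((a : ℂ) / ((p ^ k : ℕ) : ℂ)) ^ 2 *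
          Complex.Gamma ((repZ (p ^ k) (-2 * (a : ℤ)) : ℂ) / ((p ^ k : ℕ) : ℂ)) *
          (∏ b ∈ B, Complex.Gamma (((p ^ k - b : ℕ) : ℂ) / ((p ^ k : ℕ) : ℂ)) ^ 2 *
            Complex.Gamma ((repZ (p ^ k) (2 * (b : ℤ)) : ℂ) / ((p ^ k : ℕ) : ℂ))) /
          (∏ c ∈ C, Complex.Gamma ((c : ℂ) / ((p ^ k : ℕ) : ℂ)) ^ 2 *
            Complex.Gamma ((repZ (p ^ k) (-2 * (c : ℤ)) : ℂ) / ((p ^ k : ℕ) : ℂ)))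
        = w * (Real.pi : ℂ) ^ N := by
  obtain ⟨a', rfl⟩ := hpa
  obtain ⟨q, hpq⟩ := hodd
  have hp : 0 < p := by omega
  have hk : k ≠ 0 := by
    rintro rfl
    rw [pow_zero] at ha2
    omega
  set μ := p ^ (k - 1)
  have hm : p ^ k = μ * p := by rw [← pow_succ, Nat.sub_add_cancel (by omega)]
  have hμ : Odd μ := (hpq ▸ odd_two_mul_add_one q).pow
  have ha' : 0 < a' := Nat.pos_of_ne_zero (by rintro rfl; simp at ha1)
  have ha'μ : a' < μ := Nat.lt_of_mul_lt_mul_left (a := p) (by rw [mul_comm p μ, ← hm]; omega)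
  rw [Nat.mul_div_cancel_left a' hp] at hBC
  have hT : ∀ t ∈ B ∪ C, 0 < t ∧ t < p ^ k ∧ 2 * t % p ^ k ≠ 0 := fun t ht =>
    hm ▸ pos_lt_two_mul_mod_ne_zero_of_mem_image hμ ha' ha'μ (hBC ▸ ht)
  have ha : 2 * (p * a') % p ^ k ≠ 0 := by
    rw [hm, two_mul_mul_mod]
    exact (Nat.mul_pos hp (two_mul_mod_pos hμ ha' ha'μ)).ne'
  rw [← ofReal_gammaValue ha fun c hc => (hT c (mem_union_right B hc)).2.2]
  refine ⟨0, _, Complex.ofReal_ne_zero.mpr (gammaValue_pos (by positivity) (Nat.mul_pos hp ha')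
    (fun b hb => (hT b (mem_union_left C hb)).2) fun c hc => (hT c (mem_union_right B hc)).1).ne',
    ?_, by rw [zpow_zero, mul_one]⟩
  rw [algebra_adjoin_exp_eq_toSubalgebra (by positivity), IntermediateField.mem_toSubalgebra, hm]
  exact ofReal_gammaValue_mem_adjoin hpq hμ ha' ha'μ hBC hdisj (by omega) (by omega)

/-- from the proof of Theorem 7.2.12. Let `p` be an odd prime, `k ≥ 2`,
`m = p^k`, `a` an integer with `1 ≤ a ≤ m - 1` and `p ∣ a`, and `a' = a/p`.
Let `T = {a' + j·p^(k-1) : 0 ≤ j ≤ p-1}` and let `B, C` partition `T` with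
`#B = (p-1)/2` and `#C = (p+1)/2`. Then the Gamma-value
`Γ(f_a) = Γ(a/m)²·Γ([-2a]/m) · ∏_{b∈B} Γ((m-b)/m)²·Γ([2b]/m) / ∏_{c∈C} Γ(c/m)²·Γ([-2c]/m)`
belongs to `ℚ(ζ_m)ˣ · π^ℤ`. -/
theorem gamma_value_mem_cyclotomic_mul_pi_pow
    (p k : ℕ) (hp : p.Prime) (hodd : Odd p) (hk : 2 ≤ k)
    (a : ℕ) (ha1 : 1 ≤ a) (ha2 : a ≤ p ^ k - 1) (hpa : p ∣ a)
    (B C : Finset ℕ)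
    (hBC : B ∪ C = (Finset.range p).image (fun j => a / p + j * p ^ (k - 1)))
    (hdisj : Disjoint B C)
    (hB : B.card = (p - 1) / 2) (hC : C.card = (p + 1) / 2) :
    ∃ (N : ℤ) (w : ℂ), w ≠ 0 ∧
      w ∈ Algebra.adjoin ℚ
        ({Complex.exp (2 * (Real.pi : ℂ) * Complex.I / ((p ^ k : ℕ) : ℂ))} : Set ℂ) ∧
      Complex.Gamma ((a : ℂ) / ((p ^ k : ℕ) : ℂ)) ^ 2 *
          Complex.Gamma ((repZ (p ^ k) (-2 * (a : ℤ)) : ℂ) / ((p ^ k : ℕ) : ℂ)) *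
          (∏ b ∈ B, Complex.Gamma (((p ^ k - b : ℕ) : ℂ) / ((p ^ k : ℕ) : ℂ)) ^ 2 *
            Complex.Gamma ((repZ (p ^ k) (2 * (b : ℤ)) : ℂ) / ((p ^ k : ℕ) : ℂ))) /
          (∏ c ∈ C, Complex.Gamma ((c : ℂ) / ((p ^ k : ℕ) : ℂ)) ^ 2 *
            Complex.Gamma ((repZ (p ^ k) (-2 * (c : ℤ)) : ℂ) / ((p ^ k : ℕ) : ℂ)))
        = w * (Real.pi : ℂ) ^ N :=
  gamma_value_mem_cyclotomic_mul_pi_pow_general p k hodd a ha1 ha2 hpa B C hBC hdisj hB hC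
end

section
/- Let m = 2g + 1 ≥ 3 be odd. Let d_1, …, d_{2g} be integers with ∑_{j=1}^{2g} d_j = 0, set q = ∑_{j : d_j < 0} (−d_j) and e_j = d_j + 2q (so every e_j ≥ 0). Assume ∑_{j=1}^{2g} e_j·(2j + [−2j]) = 6gq·m (this is the condition that the character γ_f attached to the monomial f = ∏_j x_j^{d_j} has constant weight ⟨γ_f⟩ = 6gq, which holds whenever f is a defining equation of the Mumford–Tate group of J_m). Then (2πi)^{−6gq} · ∏_{j=1}^{2g} (Γ(j/m)²·Γ([−2j]/m))^{e_j} = (−1)^{3gq} · m^{−3q} · ∏_{j=1}^{2g} (Γ(j/m)²·Γ([−2j]/m))^{d_j}. In particular, the Gamma-value Γ(γ_f) of the character γ_f differs from the Gamma-value Γ(f) of the monomial f by a nonzero rational factor. -/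
open Finset Complex
open scoped Real

lemma repZ_congr {m : ℕ} {x y : ℤ} (h : x ≡ y [ZMOD m]) : repZ m x = repZ m y :=
  congrArg Int.toNat h

section repZ
variable {n : ℕ}

lemma natCast_repZ (x : ℤ) : (repZ (n + 1) x : ℤ) = x % (n + 1 : ℕ) :=
  Int.toNat_of_nonneg (Int.emod_nonneg x (by positivity))

lemma natCast_repZ_modEq (x : ℤ) : (repZ (n + 1) x : ℤ) ≡ x [ZMOD (n + 1 : ℕ)] := by
  rw [natCast_repZ]
  exact Int.mod_modEq _ _

lemma repZ_lt (x : ℤ) : repZ (n + 1) x < n + 1 := by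
  have := Int.emod_lt_of_pos x (b := (n + 1 : ℕ)) (by positivity)
  have := natCast_repZ (n := n) x
  omega

lemma repZ_natCast_of_lt {j : ℕ} (hj : j < n + 1) : repZ (n + 1) j = j := by
  rw [repZ, Int.emod_eq_of_lt (by positivity) (by exact_mod_cast hj), Int.toNat_natCast]

lemma repZ_mul_repZ_mul {a b : ℤ} (hab : b * a ≡ 1 [ZMOD (n + 1 : ℕ)]) {j : ℕ}
    (hj : j < n + 1) : repZ (n + 1) (b * repZ (n + 1) (a * j)) = j := by
  calc repZ (n + 1) (b * repZ (n + 1) (a * j))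
      = repZ (n + 1) (b * a * j) := by
        rw [mul_assoc]; exact repZ_congr ((natCast_repZ_modEq _).mul_left b)
    _ = repZ (n + 1) j := repZ_congr (by simpa using hab.mul_right (j : ℤ))
    _ = j := repZ_natCast_of_lt hj

lemma repZ_mul_mem_Icc {a b : ℤ} (hab : b * a ≡ 1 [ZMOD (n + 1 : ℕ)]) {j : ℕ}
    (hj : j ∈ Icc 1 n) : repZ (n + 1) (a * j) ∈ Icc 1 n := by
  rw [mem_Icc] at hj ⊢
  have hinv := repZ_mul_repZ_mul hab (j := j) (by omega)
  have := repZ_lt (n := n) (a * j)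
  refine ⟨Nat.one_le_iff_ne_zero.mpr fun h0 => ?_, by omega⟩
  rw [h0, Nat.cast_zero, mul_zero, repZ, Int.zero_emod, Int.toNat_zero] at hinv
  omega

theorem prod_repZ_mul {M : Type*} [CommMonoid M] {a b : ℤ} (hba : b * a ≡ 1 [ZMOD (n + 1 : ℕ)])
    (f : ℕ → M) : ∏ j ∈ Icc 1 n, f (repZ (n + 1) (a * j)) = ∏ j ∈ Icc 1 n, f j := by
  have hab : a * b ≡ 1 [ZMOD (n + 1 : ℕ)] := by rwa [mul_comm]
  exact prod_nbij' (fun j => repZ (n + 1) (a * j)) (fun j => repZ (n + 1) (b * j))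
    (fun j hj => repZ_mul_mem_Icc hba hj) (fun j hj => repZ_mul_mem_Icc hab hj)
    (fun j hj => repZ_mul_repZ_mul hba (by rw [mem_Icc] at hj; omega))
    (fun j hj => repZ_mul_repZ_mul hab (by rw [mem_Icc] at hj; omega)) (fun _ _ => rfl)
end repZ

lemma one_sub_exp_two_mul_mul_I (z : ℂ) :
    1 - exp (2 * z * I) = -2 * I * exp (z * I) * sin z := by
  have hinv : exp (z * I) * exp (-z * I) = 1 := by rw [← exp_add]; ring_nf; exact exp_zero
  have hsq : exp (z * I) ^ 2 = exp (2 * z * I) := by rw [← exp_nat_mul]; ring_nf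
  rw [sin]
  linear_combination I ^ 2 * hinv - I ^ 2 * hsq + (1 - exp (2 * z * I)) * I_sq

lemma prod_Icc_one_eq_prod_range {M : Type*} [CommMonoid M] (f : ℕ → M) (n : ℕ) :
    ∏ j ∈ Icc 1 n, f j = ∏ k ∈ range n, f (k + 1) := by
  rw [← Finset.Ico_add_one_right_eq_Icc, prod_Ico_eq_prod_range]
  simp [add_comm]

lemma sum_Icc_one_natCast (n : ℕ) : ∑ j ∈ Icc 1 n, (j : ℂ) = n * (n + 1) / 2 := by
  induction n with
  | zero => simp
  | succ n ih =>
    rw [sum_Icc_succ_top (by omega), ih]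
    push_cast
    ring

theorem prod_sin_pi_mul_div (n : ℕ) :
    ∏ j ∈ Icc 1 n, sin (π * j / (n + 1 : ℕ)) = (n + 1 : ℕ) / 2 ^ n := by
  have hroot := isPrimitiveRoot_exp (n + 1) n.succ_ne_zero
  have hfactor : ∀ j : ℕ, 1 - exp (2 * π * I / (n + 1 : ℕ)) ^ j
      = -2 * I * exp (π * j / (n + 1 : ℕ) * I) * sin (π * j / (n + 1 : ℕ)) := by
    intro j
    rw [← one_sub_exp_two_mul_mul_I, ← exp_nat_mul]
    ring_nf
  have hphase : ∏ j ∈ Icc 1 n, exp (π * j / (n + 1 : ℕ) * I) = I ^ n := by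
    have hI : I ^ n = exp (n * (π / 2 * I)) := by rw [exp_nat_mul, exp_pi_div_two_mul_I]
    rw [hI, ← exp_sum, ← sum_mul, ← sum_div, ← mul_sum, sum_Icc_one_natCast]
    push_cast
    field_simp
  have hunit : (-2) ^ n * I ^ n * I ^ n = (2 : ℂ) ^ n := by
    rw [← mul_pow, ← mul_pow, mul_assoc, I_mul_I]
    norm_num
  have key := hroot.prod_one_sub_pow_eq_order
  rw [← prod_Icc_one_eq_prod_range (fun j => 1 - exp (2 * π * I / (n + 1 : ℕ)) ^ j)] at key
  simp only [hfactor, prod_mul_distrib, prod_const, Nat.card_Icc, hphase] at key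
  rw [eq_div_iff (pow_ne_zero _ two_ne_zero)]
  push_cast at key ⊢
  linear_combination key - (∏ j ∈ Icc 1 n, sin (π * j / (n + 1))) * hunit

lemma prod_Gamma_div_eq_prod_Gamma_one_sub (n : ℕ) :
    ∏ j ∈ Icc 1 n, Gamma (j / (n + 1 : ℕ)) = ∏ j ∈ Icc 1 n, Gamma (1 - j / (n + 1 : ℕ)) := by
  refine prod_nbij' (fun j => n + 1 - j) (fun j => n + 1 - j) ?_ ?_ ?_ ?_ ?_ <;>
    intro j hj <;> simp only [mem_Icc] at hj ⊢
  · omega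
  · omega
  · omega
  · omega
  · congr 1
    rw [Nat.cast_sub (by omega)]
    field_simp
    ring

theorem prod_Gamma_div_sq (n : ℕ) :
    (∏ j ∈ Icc 1 n, Gamma (j / (n + 1 : ℕ))) ^ 2 = (2 * π) ^ n / (n + 1 : ℕ) := by
  calc (∏ j ∈ Icc 1 n, Gamma (j / (n + 1 : ℕ))) ^ 2
      = ∏ j ∈ Icc 1 n, Gamma (j / (n + 1 : ℕ)) * Gamma (1 - j / (n + 1 : ℕ)) := by
        rw [sq, prod_mul_distrib]
        nth_rw 2 [prod_Gamma_div_eq_prod_Gamma_one_sub]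
    _ = ∏ j ∈ Icc 1 n, π / sin (π * j / (n + 1 : ℕ)) := by
        simp only [Gamma_mul_Gamma_one_sub, mul_div_assoc]
    _ = (2 * π) ^ n / (n + 1 : ℕ) := by
        rw [prod_div_distrib, prod_const, Nat.card_Icc, prod_sin_pi_mul_div, mul_pow]
        field_simp
        simp

lemma Gamma_natCast_div_ne_zero {j m : ℕ} (hj : 0 < j) (hm : 0 < m) : Gamma (j / m) ≠ 0 :=
  Gamma_ne_zero_of_re_pos (by rw [div_natCast_re, natCast_re]; positivity)

lemma prod_zpow_add {ι G₀ : Type*} [CommGroupWithZero G₀] {s : Finset ι} {f : ι → G₀}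
    (hf : ∀ i ∈ s, f i ≠ 0) (d : ι → ℤ) (k : ℤ) :
    ∏ i ∈ s, f i ^ (d i + k) = (∏ i ∈ s, f i ^ d i) * (∏ i ∈ s, f i) ^ k := by
  rw [← prod_zpow, ← prod_mul_distrib]
  exact prod_congr rfl fun i hi => zpow_add₀ (hf i hi) _ _

lemma mul_I_zpow_neg_two_mul_mul_pow {x : ℂ} (hx : x ≠ 0) (k : ℕ) :
    (x * I) ^ (-(2 * k : ℤ)) * x ^ (2 * k) = (-1) ^ k := by
  rw [show -(2 * k : ℤ) = -((2 * k : ℕ) : ℤ) by push_cast; ring, zpow_neg, zpow_natCast, mul_pow,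
    pow_mul I, I_sq]
  field_simp
  rw [← pow_mul, pow_mul', neg_one_sq, one_pow]

lemma two_pi_I_zpow_mul_zpow (g q : ℕ) (m : ℂ) :
    (2 * π * I) ^ (-(6 * g * q : ℤ)) * (((2 * π) ^ (2 * g) / m) ^ 3) ^ (q : ℤ)
      = (-1) ^ (3 * g * q) * m ^ (-(3 * q : ℤ)) := by
  have hpow : (((2 * π : ℂ) ^ (2 * g) / m) ^ 3) ^ (q : ℤ)
      = (2 * π) ^ (2 * (3 * g * q)) * m ^ (-(3 * q : ℤ)) := by
    rw [zpow_natCast, zpow_neg, show (3 * q : ℤ) = ((3 * q : ℕ) : ℤ) by push_cast; ring,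
      zpow_natCast]
    ring
  rw [hpow, ← mul_assoc, show -(6 * g * q : ℤ) = -(2 * (3 * g * q : ℕ) : ℤ) by push_cast; ring,
    mul_I_zpow_neg_two_mul_mul_pow (by simp [Real.pi_ne_zero])]

lemma natCast_mul_neg_two_modEq_one (g : ℕ) : (g : ℤ) * -2 ≡ 1 [ZMOD (2 * g + 1 : ℕ)] :=
  Int.modEq_iff_dvd.mpr ⟨1, by push_cast; ring⟩

lemma Gamma_sq_mul_Gamma_repZ_ne_zero {g j : ℕ} (hj : j ∈ Icc 1 (2 * g)) :
    Gamma (j / (2 * g + 1 : ℕ)) ^ 2 * Gamma (repZ (2 * g + 1) (-(2 * (j : ℤ))) / (2 * g + 1 : ℕ))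
      ≠ 0 := by
  have hj' := repZ_mul_mem_Icc (natCast_mul_neg_two_modEq_one g) hj
  simp only [mem_Icc, neg_mul] at hj hj'
  exact mul_ne_zero (pow_ne_zero _ (Gamma_natCast_div_ne_zero (by omega) (by omega)))
    (Gamma_natCast_div_ne_zero (by omega) (by omega))

theorem prod_Gamma_sq_mul_Gamma_repZ_sq (g : ℕ) :
    (∏ j ∈ Icc 1 (2 * g),
        Gamma (j / (2 * g + 1 : ℕ)) ^ 2 * Gamma (repZ (2 * g + 1) (-(2 * (j : ℤ))) / (2 * g + 1 : ℕ)))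
        ^ 2
      = ((2 * π) ^ (2 * g) / (2 * g + 1 : ℕ)) ^ 3 := by
  have hperm := prod_repZ_mul (n := 2 * g) (natCast_mul_neg_two_modEq_one g)
    (fun j => Gamma (j / (2 * g + 1 : ℕ)))
  simp only [neg_mul] at hperm
  rw [prod_mul_distrib, prod_pow, hperm, ← prod_Gamma_div_sq]
  ring

theorem gamma_value_of_character_eq_rat_mul_gamma_value_general
    (g : ℕ) (d : ℕ → ℤ) (q : ℕ) :
    (2 * (Real.pi : ℂ) * Complex.I) ^ (-(6 * (g : ℤ) * (q : ℤ))) *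
        ∏ j ∈ Finset.Icc 1 (2 * g),
          (Complex.Gamma ((j : ℂ) / ((2 * g + 1 : ℕ) : ℂ)) ^ 2 *
            Complex.Gamma ((repZ (2 * g + 1) (-(2 * (j : ℤ))) : ℂ) / ((2 * g + 1 : ℕ) : ℂ)))
            ^ (d j + 2 * (q : ℤ))
      = (-1 : ℂ) ^ (3 * g * q) * ((2 * g + 1 : ℕ) : ℂ) ^ (-(3 * (q : ℤ))) *
        ∏ j ∈ Finset.Icc 1 (2 * g),
          (Complex.Gamma ((j : ℂ) / ((2 * g + 1 : ℕ) : ℂ)) ^ 2 *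
            Complex.Gamma ((repZ (2 * g + 1) (-(2 * (j : ℤ))) : ℂ) / ((2 * g + 1 : ℕ) : ℂ)))
            ^ (d j) ∧
    ∃ r : ℚ, r ≠ 0 ∧
      (2 * (Real.pi : ℂ) * Complex.I) ^ (-(6 * (g : ℤ) * (q : ℤ))) *
        ∏ j ∈ Finset.Icc 1 (2 * g),
          (Complex.Gamma ((j : ℂ) / ((2 * g + 1 : ℕ) : ℂ)) ^ 2 *
            Complex.Gamma ((repZ (2 * g + 1) (-(2 * (j : ℤ))) : ℂ) / ((2 * g + 1 : ℕ) : ℂ)))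
            ^ (d j + 2 * (q : ℤ))
      = (r : ℂ) *
        ∏ j ∈ Finset.Icc 1 (2 * g),
          (Complex.Gamma ((j : ℂ) / ((2 * g + 1 : ℕ) : ℂ)) ^ 2 *
            Complex.Gamma ((repZ (2 * g + 1) (-(2 * (j : ℤ))) : ℂ) / ((2 * g + 1 : ℕ) : ℂ)))
            ^ (d j) := by
  set G : ℕ → ℂ := fun j =>
    Gamma (j / (2 * g + 1 : ℕ)) ^ 2 * Gamma (repZ (2 * g + 1) (-(2 * (j : ℤ))) / (2 * g + 1 : ℕ))
  have hmain : (2 * π * I) ^ (-(6 * g * q : ℤ)) * ∏ j ∈ Icc 1 (2 * g), G j ^ (d j + 2 * (q : ℤ))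
      = (-1) ^ (3 * g * q) * ((2 * g + 1 : ℕ) : ℂ) ^ (-(3 * q : ℤ))
        * ∏ j ∈ Icc 1 (2 * g), G j ^ d j := by
    rw [prod_zpow_add (fun j hj => Gamma_sq_mul_Gamma_repZ_ne_zero hj), zpow_mul, zpow_two,
      ← pow_two, prod_Gamma_sq_mul_Gamma_repZ_sq, mul_left_comm, two_pi_I_zpow_mul_zpow]
    exact mul_comm _ _
  refine ⟨hmain, (-1) ^ (3 * g * q) * ((2 * g + 1 : ℕ) : ℚ) ^ (-(3 * q : ℤ)), by positivity, ?_⟩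
  rw [hmain, Rat.cast_mul, Rat.cast_pow, Rat.cast_zpow, Rat.cast_neg, Rat.cast_one,
    Rat.cast_natCast]

/-- Proposition 6.4.3, odd case. Let `m = 2g + 1 ≥ 3` be odd, let
`d₁, …, d_{2g}` be integers summing to `0`, `q` the sum of the absolute values of the negative
`dⱼ`, and `eⱼ = dⱼ + 2q`. Assume `∑ⱼ eⱼ·(2j + [-2j]) = 6gq·m`. Then
`(2πi)^(-6gq) · ∏ⱼ (Γ(j/m)²·Γ([-2j]/m))^{eⱼ} = (-1)^{3gq} · m^{-3q} · ∏ⱼ (Γ(j/m)²·Γ([-2j]/m))^{dⱼ}`;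
in particular the Gamma-value `Γ(γ_f)` differs from `Γ(f)` by a nonzero rational factor. -/
theorem gamma_value_of_character_eq_rat_mul_gamma_value
    (g : ℕ) (hg : 1 ≤ g) (d : ℕ → ℤ) (q : ℕ)
    (hsum : ∑ j ∈ Finset.Icc 1 (2 * g), d j = 0)
    (hq : (q : ℤ) = ∑ j ∈ (Finset.Icc 1 (2 * g)).filter (fun j => d j < 0), (-(d j)))
    (hweight : ∑ j ∈ Finset.Icc 1 (2 * g),
        (d j + 2 * (q : ℤ)) * (2 * (j : ℤ) + (repZ (2 * g + 1) (-(2 * (j : ℤ))) : ℤ))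
      = 6 * (g : ℤ) * (q : ℤ) * (2 * (g : ℤ) + 1)) :
    (2 * (Real.pi : ℂ) * Complex.I) ^ (-(6 * (g : ℤ) * (q : ℤ))) *
        ∏ j ∈ Finset.Icc 1 (2 * g),
          (Complex.Gamma ((j : ℂ) / ((2 * g + 1 : ℕ) : ℂ)) ^ 2 *
            Complex.Gamma ((repZ (2 * g + 1) (-(2 * (j : ℤ))) : ℂ) / ((2 * g + 1 : ℕ) : ℂ)))
            ^ (d j + 2 * (q : ℤ))
      = (-1 : ℂ) ^ (3 * g * q) * ((2 * g + 1 : ℕ) : ℂ) ^ (-(3 * (q : ℤ))) *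
        ∏ j ∈ Finset.Icc 1 (2 * g),
          (Complex.Gamma ((j : ℂ) / ((2 * g + 1 : ℕ) : ℂ)) ^ 2 *
            Complex.Gamma ((repZ (2 * g + 1) (-(2 * (j : ℤ))) : ℂ) / ((2 * g + 1 : ℕ) : ℂ)))
            ^ (d j) ∧
    ∃ r : ℚ, r ≠ 0 ∧
      (2 * (Real.pi : ℂ) * Complex.I) ^ (-(6 * (g : ℤ) * (q : ℤ))) *
        ∏ j ∈ Finset.Icc 1 (2 * g),
          (Complex.Gamma ((j : ℂ) / ((2 * g + 1 : ℕ) : ℂ)) ^ 2 *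
            Complex.Gamma ((repZ (2 * g + 1) (-(2 * (j : ℤ))) : ℂ) / ((2 * g + 1 : ℕ) : ℂ)))
            ^ (d j + 2 * (q : ℤ))
      = (r : ℂ) *
        ∏ j ∈ Finset.Icc 1 (2 * g),
          (Complex.Gamma ((j : ℂ) / ((2 * g + 1 : ℕ) : ℂ)) ^ 2 *
            Complex.Gamma ((repZ (2 * g + 1) (-(2 * (j : ℤ))) : ℂ) / ((2 * g + 1 : ℕ) : ℂ)))
            ^ (d j) :=
  gamma_value_of_character_eq_rat_mul_gamma_value_general g d q
end

section
/- Let m ≥ 3 and let k, j be integers with 1 ≤ k, j ≤ m − 1 such that m does not divide 2k and m does not divide 2j. Then the real number sin(jπ/m)²·sin(2jπ/m) / (sin(kπ/m)²·sin(2kπ/m)) lies in the subfield ℚ(ζ_m) of ℂ generated by ζ_m = e^{2πi/m}. Equivalently, the Gamma-value Γ(f) of the monomial equation f = x_k·x_{m−k}/(x_j·x_{m−j}) coming from the polarization of J_m lies in ℚ(ζ_m). -/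
/-!
With `ζ = e^{2πi/m}` and `z = ζ^a = e^{2iaπ/m}` one has `2 - z - z⁻¹ = 4 sin²(aπ/m)` and
`z - z⁻¹ = 2i sin(2aπ/m)`, so `sin²(aπ/m) sin(2aπ/m)` is `(2 - z - z⁻¹)(z - z⁻¹)` up to the common
factor `8i`. The ratio of two such values is therefore a rational expression in powers of `ζ`,
and `ℚ[ζ]` is a field because `ζ` is a root of unity.
-/

open Complex

section SineWeight

variable {F : Type*} [Field F]

def sineWeight (z : F) : F := (2 - z - z⁻¹) * (z - z⁻¹)

theorem sineWeight_mem {S : Type*} [SetLike S F] [SubfieldClass S F] {s : S} {z : F}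
    (hz : z ∈ s) : sineWeight z ∈ s :=
  mul_mem (sub_mem (sub_mem (ofNat_mem s 2) hz) (inv_mem hz)) (sub_mem hz (inv_mem hz))

end SineWeight

theorem sineWeight_exp_two_mul_I (x : ℝ) :
    sineWeight (exp (2 * x * I)) = 8 * I * ((Real.sin x ^ 2 * Real.sin (2 * x) : ℝ) : ℂ) := by
  have hcos : cos (2 * x) = 1 - 2 * sin x ^ 2 := by
    linear_combination cos_two_mul (x : ℂ) + 2 * sin_sq_add_cos_sq (x : ℂ)
  rw [sineWeight, ← exp_neg, ← neg_mul, exp_mul_I, exp_mul_I, cos_neg, sin_neg]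
  push_cast
  linear_combination (-4 * I * sin (2 * x)) * hcos

theorem sineWeight_exp_pow (m a : ℕ) :
    sineWeight (exp (2 * Real.pi * I / m) ^ a) =
      8 * I * ((Real.sin (a * Real.pi / m) ^ 2 * Real.sin (2 * a * Real.pi / m) : ℝ) : ℂ) := by
  rw [← exp_nat_mul, mul_assoc 2 (a : ℝ), mul_div_assoc 2, ← sineWeight_exp_two_mul_I]
  congr 2
  push_cast
  ring

theorem isIntegral_exp_two_pi_I_div (m : ℕ) : IsIntegral ℚ (exp (2 * Real.pi * I / m)) := by
  rcases Nat.eq_zero_or_pos m with rfl | hm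
  · simpa using isIntegral_one
  · refine IsIntegral.of_pow hm ?_
    rw [(isPrimitiveRoot_exp m hm.ne').pow_eq_one]
    exact isIntegral_one

theorem sine_ratio_mem_cyclotomic_general
    (m : ℕ) (k j : ℕ) :
    ((Real.sin ((j : ℝ) * Real.pi / m) ^ 2 * Real.sin (2 * (j : ℝ) * Real.pi / m) /
        (Real.sin ((k : ℝ) * Real.pi / m) ^ 2 * Real.sin (2 * (k : ℝ) * Real.pi / m)) : ℝ) : ℂ)
      ∈ Algebra.adjoin ℚ
          ({Complex.exp (2 * (Real.pi : ℂ) * Complex.I / (m : ℂ))} : Set ℂ) := by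
  set ζ := exp (2 * Real.pi * I / m)
  have hratio : ((Real.sin (j * Real.pi / m) ^ 2 * Real.sin (2 * j * Real.pi / m) /
      (Real.sin (k * Real.pi / m) ^ 2 * Real.sin (2 * k * Real.pi / m)) : ℝ) : ℂ) =
      sineWeight (ζ ^ j) / sineWeight (ζ ^ k) := by
    rw [sineWeight_exp_pow, sineWeight_exp_pow, mul_div_mul_left _ _ (by simp), ofReal_div]
  have hζ : ζ ∈ IntermediateField.adjoin ℚ {ζ} := IntermediateField.mem_adjoin_simple_self ℚ ζ
  rw [hratio, ← IntermediateField.adjoin_simple_toSubalgebra_of_isAlgebraic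
    (isIntegral_exp_two_pi_I_div m).isAlgebraic, IntermediateField.mem_toSubalgebra]
  exact div_mem (sineWeight_mem (pow_mem hζ j)) (sineWeight_mem (pow_mem hζ k))

/-- Example 6.4.7. Let `m ≥ 3` and let `k, j ∈ {1, …, m-1}` be such that
`m ∤ 2k` and `m ∤ 2j`. Then `sin(jπ/m)²·sin(2jπ/m) / (sin(kπ/m)²·sin(2kπ/m))` lies in the
subfield `ℚ(ζ_m)` of `ℂ`; this is the Gamma-value of the polarization equation
`x_k·x_{m-k}/(x_j·x_{m-j})` for the Mumford–Tate group of the Jacobian of `y² = xᵐ + 1`. -/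
theorem sine_ratio_mem_cyclotomic
    (m : ℕ) (hm : 3 ≤ m) (k j : ℕ)
    (hk1 : 1 ≤ k) (hk2 : k ≤ m - 1) (hj1 : 1 ≤ j) (hj2 : j ≤ m - 1)
    (hk : ¬ (m ∣ 2 * k)) (hj : ¬ (m ∣ 2 * j)) :
    ((Real.sin ((j : ℝ) * Real.pi / m) ^ 2 * Real.sin (2 * (j : ℝ) * Real.pi / m) /
        (Real.sin ((k : ℝ) * Real.pi / m) ^ 2 * Real.sin (2 * (k : ℝ) * Real.pi / m)) : ℝ) : ℂ)
      ∈ Algebra.adjoin ℚ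
          ({Complex.exp (2 * (Real.pi : ℂ) * Complex.I / (m : ℂ))} : Set ℂ) :=
  sine_ratio_mem_cyclotomic_general m k j
end

section
/- Let m ≥ 3 be odd, let q be a positive integer, and let i_1, …, i_q ∈ {1, …, m−1}. For an integer u coprime to m set W(u) = ∑_{j=1}^{q} (2·{u·i_j/m} + {−2u·i_j/m}), where {x} denotes the fractional part of a real number x. Assume that W(u) takes the same value for all integers u coprime to m. Then for every integer u coprime to m one has ∑_{j=1}^{q} (2·{u·i_j/m} − {2u·i_j/m}) = q/2. -/
private lemma fract_ndvd_ne_zero (m : ℕ) (hm : 0 < m) (n : ℤ) (hn : ¬ (m : ℤ) ∣ n) :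
    Int.fract ((n : ℝ) / (m : ℝ)) ≠ 0 := by
  intro h
  apply hn
  have hm' : (m : ℝ) ≠ 0 := by positivity
  have h2 : (n : ℝ) / (m : ℝ) = (⌊(n : ℝ) / (m : ℝ)⌋ : ℝ) := by
    have := Int.fract_add_floor ((n : ℝ) / (m : ℝ))
    rw [h, zero_add] at this
    exact this.symm
  have h3 : (n : ℝ) = (m : ℝ) * (⌊(n : ℝ) / (m : ℝ)⌋ : ℝ) := by
    field_simp at h2
    linarith
  refine ⟨⌊(n : ℝ) / (m : ℝ)⌋, ?_⟩
  exact_mod_cast h3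

/-- equation (9.3.4). Let `m ≥ 3` be odd, `q ≥ 1`, and
`i₁, …, i_q ∈ {1, …, m-1}`. Suppose that `W(u) = ∑ⱼ (2·{u·iⱼ/m} + {-2u·iⱼ/m})` takes the same
value for all integers `u` coprime to `m`. Then for every integer `u` coprime to `m`,
`∑ⱼ (2·{u·iⱼ/m} - {2u·iⱼ/m}) = q/2`. -/
theorem sum_eps_eq_half
    (m : ℕ) (hm : 3 ≤ m) (hmodd : Odd m)
    (q : ℕ) (hq : 0 < q) (i : Fin q → ℕ)
    (hi : ∀ j, 1 ≤ i j ∧ i j ≤ m - 1)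
    (hW : ∀ u v : ℤ, Int.gcd u m = 1 → Int.gcd v m = 1 →
      (∑ j, (2 * Int.fract (((u * (i j : ℤ) : ℤ) : ℝ) / (m : ℝ)) +
        Int.fract (((-2 * u * (i j : ℤ) : ℤ) : ℝ) / (m : ℝ)))) =
      (∑ j, (2 * Int.fract (((v * (i j : ℤ) : ℤ) : ℝ) / (m : ℝ)) +
        Int.fract (((-2 * v * (i j : ℤ) : ℤ) : ℝ) / (m : ℝ))))) :
    ∀ u : ℤ, Int.gcd u m = 1 →
      (∑ j, (2 * Int.fract (((u * (i j : ℤ) : ℤ) : ℝ) / (m : ℝ)) -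
        Int.fract (((2 * u * (i j : ℤ) : ℤ) : ℝ) / (m : ℝ)))) = (q : ℝ) / 2 := by
  intro u hu
  have hm0 : 0 < m := by omega
  -- coprimality facts
  have hcop : IsCoprime (u : ℤ) (m : ℤ) := Int.isCoprime_iff_gcd_eq_one.mpr hu
  have h2cop : IsCoprime (2 : ℤ) (m : ℤ) := by
    rw [Int.isCoprime_iff_gcd_eq_one, show (2 : ℤ) = ((2 : ℕ) : ℤ) from rfl,
      Int.gcd_natCast_natCast]
    exact Nat.coprime_two_left.mpr hmodd
  have hucop : IsCoprime (-u : ℤ) (m : ℤ) := hcop.neg_left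
  have hu' : Int.gcd (-u) m = 1 := Int.isCoprime_iff_gcd_eq_one.mp hucop
  -- non-divisibility
  have hndvd : ∀ (a : ℤ), IsCoprime a (m : ℤ) → ∀ j : Fin q, ¬ (m : ℤ) ∣ a * (i j : ℤ) := by
    intro a ha j hdvd
    have := (ha.symm.dvd_of_dvd_mul_left hdvd)
    have h1 := (hi j).1
    have h2 := (hi j).2
    have := Int.le_of_dvd (by exact_mod_cast h1) this
    omega
  -- fract of neg
  have key : ∀ j : Fin q,
      Int.fract (((-2 * u * (i j : ℤ) : ℤ) : ℝ) / (m : ℝ)) =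
        1 - Int.fract (((2 * u * (i j : ℤ) : ℤ) : ℝ) / (m : ℝ)) := by
    intro j
    have hnz := fract_ndvd_ne_zero m hm0 (2 * u * (i j : ℤ))
      (hndvd (2 * u) (h2cop.mul_left hcop) j)
    have : ((-2 * u * (i j : ℤ) : ℤ) : ℝ) / (m : ℝ) =
        -(((2 * u * (i j : ℤ) : ℤ) : ℝ) / (m : ℝ)) := by push_cast; ring
    rw [this, Int.fract_neg hnz]
  have keyu : ∀ j : Fin q,
      Int.fract (((-u * (i j : ℤ) : ℤ) : ℝ) / (m : ℝ)) =
        1 - Int.fract (((u * (i j : ℤ) : ℤ) : ℝ) / (m : ℝ)) := by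
    intro j
    have hnz := fract_ndvd_ne_zero m hm0 (u * (i j : ℤ)) (hndvd u hcop j)
    have : ((-u * (i j : ℤ) : ℤ) : ℝ) / (m : ℝ) =
        -(((u * (i j : ℤ) : ℤ) : ℝ) / (m : ℝ)) := by push_cast; ring
    rw [this, Int.fract_neg hnz]
  have key2 : ∀ j : Fin q,
      Int.fract (((-2 * -u * (i j : ℤ) : ℤ) : ℝ) / (m : ℝ)) =
        Int.fract (((2 * u * (i j : ℤ) : ℤ) : ℝ) / (m : ℝ)) := by
    intro j
    congr 2
    push_cast; ring_nf
  have hWu := hW u (-u) hu hu'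
  simp only [key2, keyu, key] at hWu
  have e1 : (∑ j, (2 * Int.fract (((u * (i j : ℤ) : ℤ) : ℝ) / (m : ℝ)) +
      (1 - Int.fract (((2 * u * (i j : ℤ) : ℤ) : ℝ) / (m : ℝ))))) =
      (∑ j, (2 * Int.fract (((u * (i j : ℤ) : ℤ) : ℝ) / (m : ℝ)) -
        Int.fract (((2 * u * (i j : ℤ) : ℤ) : ℝ) / (m : ℝ)))) + q := by
    have hq' : ((q : ℝ)) = ∑ _j : Fin q, (1 : ℝ) := by simp
    rw [hq', ← Finset.sum_add_distrib]
    exact Finset.sum_congr rfl fun j _ => by ring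
  have e2 : (∑ j, (2 * (1 - Int.fract (((u * (i j : ℤ) : ℤ) : ℝ) / (m : ℝ))) +
      Int.fract (((2 * u * (i j : ℤ) : ℤ) : ℝ) / (m : ℝ)))) =
      (q : ℝ) * 2 - (∑ j, (2 * Int.fract (((u * (i j : ℤ) : ℤ) : ℝ) / (m : ℝ)) -
        Int.fract (((2 * u * (i j : ℤ) : ℤ) : ℝ) / (m : ℝ)))) := by
    have hq' : ((q : ℝ)) * 2 = ∑ _j : Fin q, (2 : ℝ) := by simp [mul_comm]
    rw [hq', ← Finset.sum_sub_distrib]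
    exact Finset.sum_congr rfl fun j _ => by ring
  rw [e1, e2] at hWu
  linarith
end

section
/- The following exact evaluation of a product of Gamma values holds: Γ(9/15)²·Γ(12/15)³·Γ(6/15) / (Γ(8/15)²·Γ(14/15)·Γ(13/15)²·Γ(4/15)) = (1/2)·√(3/5)·(1/sin(3π/15)). -/
/-!
The triplication formula `Γ(s) Γ(s + 1/3) Γ(s + 2/3) 3^(3s - 1/2) = 2π Γ(3s)` follows from the
Bohr–Mollerup theorem, exactly as Legendre's doubling formula does. At `s = 1/5` and `s = 4/15`
it expresses `Γ(8/15) Γ(13/15)` and `Γ(4/15) Γ(14/15)` through `Γ(1/5)`, `Γ(3/5)`, `Γ(4/5)`;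
the reflection formula then turns `Γ(1/5) Γ(4/5)` and `Γ(2/5) Γ(3/5)` into `π / sin`, the
powers of `3` combine to `√3`, and the value collapses to `√3 / (8 sin²(π/5) sin(2π/5))`,
which `sin(π/5) sin(2π/5) = √5/4` brings to the stated form.
-/

open Real Set

namespace Real

lemma convexOn_log_Gamma_mul_add {a c : ℝ} (ha : 0 < a) (hc : 0 ≤ c) :
    ConvexOn ℝ (Ioi 0) (fun x => log (Gamma (a * x + c))) := by
  have h := convexOn_log_Gamma.comp_affineMap
    ((DistribSMul.toLinearMap ℝ ℝ a).toAffineMap + AffineMap.const ℝ ℝ c)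
  refine h.subset (fun x (hx : 0 < x) => ?_) (convex_Ioi _)
  change 0 < a * x + c
  positivity

noncomputable def triplingGamma (s : ℝ) : ℝ :=
  Gamma (s / 3) * Gamma (s / 3 + 1 / 3) * Gamma (s / 3 + 2 / 3) * 3 ^ (s - 1 / 2) / (2 * π)

lemma triplingGamma_add_one {s : ℝ} (hs : s ≠ 0) :
    triplingGamma (s + 1) = s * triplingGamma s := by
  rw [triplingGamma, triplingGamma, show (s + 1) / 3 = s / 3 + 1 / 3 by ring,
    show s / 3 + 1 / 3 + 1 / 3 = s / 3 + 2 / 3 by ring,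
    show s / 3 + 1 / 3 + 2 / 3 = s / 3 + 1 by ring, Gamma_add_one (div_ne_zero hs three_ne_zero),
    show s + 1 - 1 / 2 = s - 1 / 2 + 1 by ring, rpow_add three_pos, rpow_one]
  ring

lemma triplingGamma_one : triplingGamma 1 = 1 := by
  have hreflection := Gamma_mul_Gamma_one_sub (1 / 3)
  rw [show (1 : ℝ) - 1 / 3 = 1 / 3 + 1 / 3 by norm_num, show π * (1 / 3) = π / 3 by ring,
    sin_pi_div_three] at hreflection
  rw [triplingGamma, show (1 : ℝ) / 3 + 2 / 3 = 1 by norm_num, Gamma_one, mul_one, hreflection,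
    show (1 : ℝ) - 1 / 2 = 1 / 2 by norm_num, ← sqrt_eq_rpow]
  field_simp

lemma triplingGamma_pos {s : ℝ} (hs : 0 < s) : 0 < triplingGamma s := by
  rw [triplingGamma]
  have := pi_pos
  positivity

lemma log_triplingGamma_eq :
    EqOn (log ∘ triplingGamma)
      (fun s => log (Gamma (1 / 3 * s)) + log (Gamma (1 / 3 * s + 1 / 3)) +
        log (Gamma (1 / 3 * s + 2 / 3)) + s * log 3 + -(log (2 * π) + 1 / 2 * log 3))
      (Ioi 0) := by
  intro s (hs : 0 < s)
  have := pi_pos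
  simp only [Function.comp_apply, triplingGamma, one_div_mul_eq_div]
  rw [log_div (by positivity) (by positivity), log_mul (by positivity) (by positivity),
    log_mul (by positivity) (by positivity), log_mul (by positivity) (by positivity),
    log_rpow three_pos]
  ring

lemma convexOn_log_triplingGamma : ConvexOn ℝ (Ioi 0) (log ∘ triplingGamma) := by
  refine ConvexOn.congr ?_ log_triplingGamma_eq.symm
  have hthird : (0 : ℝ) < 1 / 3 := by norm_num
  have hlin : ConvexOn ℝ (Ioi (0 : ℝ)) (fun x => x * log 3) := by
    simpa only [smul_eq_mul, mul_comm, id_eq] using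
      (convexOn_id (convex_Ioi (0 : ℝ))).smul (log_pos (by norm_num : (1 : ℝ) < 3)).le
  refine ((((?_ : ConvexOn ℝ _ fun x => log (Gamma (1 / 3 * x))).add
    (convexOn_log_Gamma_mul_add hthird (by norm_num))).add
    (convexOn_log_Gamma_mul_add hthird (by norm_num))).add hlin).add_const _
  simpa using convexOn_log_Gamma_mul_add hthird le_rfl

lemma triplingGamma_eq_Gamma {s : ℝ} (hs : 0 < s) : triplingGamma s = Gamma s :=
  eq_Gamma_of_log_convex convexOn_log_triplingGamma (fun hy => triplingGamma_add_one hy.ne')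
    triplingGamma_pos triplingGamma_one hs

theorem Gamma_triplication_of_pos {s : ℝ} (hs : 0 < s) :
    Gamma s * Gamma (s + 1 / 3) * Gamma (s + 2 / 3) * 3 ^ (3 * s - 1 / 2) =
      2 * π * Gamma (3 * s) := by
  have h := triplingGamma_eq_Gamma (mul_pos three_pos hs)
  rw [triplingGamma, mul_div_cancel_left₀ s three_ne_zero, div_eq_iff (by positivity)] at h
  rw [h]
  ring

lemma sin_pi_div_five_mul_sin_two_pi_div_five : sin (π / 5) * sin (2 * π / 5) = √5 / 4 := by
  have hsin_sq : sin (π / 5) ^ 2 = 1 - ((1 + √5) / 4) ^ 2 := by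
    rw [← cos_pi_div_five, ← sin_sq_add_cos_sq (π / 5)]
    ring
  have h5 : √5 ^ 2 = 5 := sq_sqrt (by norm_num)
  rw [show 2 * π / 5 = 2 * (π / 5) by ring, sin_two_mul, cos_pi_div_five]
  linear_combination ((1 + √5) / 2) * hsin_sq - ((√5 + 3) / 32) * h5

lemma three_rpow_tenth_sq_mul_three_rpow_three_tenths :
    ((3 : ℝ) ^ (1 / 10 : ℝ)) ^ 2 * (3 : ℝ) ^ (3 / 10 : ℝ) = √3 := by
  rw [← rpow_natCast, ← rpow_mul (by norm_num), ← rpow_add (by norm_num), sqrt_eq_rpow]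
  norm_num

end Real

theorem gamma_value_x9x12_x8x13_real :
    Gamma (9 / 15) ^ 2 * Gamma (12 / 15) ^ 3 * Gamma (6 / 15) /
      (Gamma (8 / 15) ^ 2 * Gamma (14 / 15) * Gamma (13 / 15) ^ 2 * Gamma (4 / 15)) =
      1 / 2 * √(3 / 5) * (1 / sin (3 * π / 15)) := by
  have htrip₁ := Gamma_triplication_of_pos (s := 1 / 5) (by norm_num)
  have htrip₂ := Gamma_triplication_of_pos (s := 4 / 15) (by norm_num)
  norm_num at htrip₁ htrip₂
  have hrefl₁ : Gamma (1 / 5) * Gamma (4 / 5) = π / sin (π / 5) := by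
    convert Gamma_mul_Gamma_one_sub (1 / 5) using 3 <;> ring
  have hrefl₂ : Gamma (2 / 5) * Gamma (3 / 5) = π / sin (2 * π / 5) := by
    convert Gamma_mul_Gamma_one_sub (2 / 5) using 3 <;> ring
  have hπ := pi_pos
  have hsin₁ : 0 < sin (π / 5) := sin_pos_of_pos_of_lt_pi (by positivity) (by linarith)
  have hsin₂ : 0 < sin (2 * π / 5) := sin_pos_of_pos_of_lt_pi (by positivity) (by linarith)
  rw [show (9 / 15 : ℝ) = 3 / 5 by norm_num, show (12 / 15 : ℝ) = 4 / 5 by norm_num,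
    show (6 / 15 : ℝ) = 2 / 5 by norm_num, show 3 * π / 15 = π / 5 by ring]
  calc Gamma (3 / 5) ^ 2 * Gamma (4 / 5) ^ 3 * Gamma (2 / 5) /
        (Gamma (8 / 15) ^ 2 * Gamma (14 / 15) * Gamma (13 / 15) ^ 2 * Gamma (4 / 15))
      = Gamma (2 / 5) * Gamma (3 / 5) * (Gamma (1 / 5) * Gamma (4 / 5)) ^ 2 *
          (Gamma (3 / 5) ^ 2 * Gamma (4 / 5)) *
          (((3 : ℝ) ^ (1 / 10 : ℝ)) ^ 2 * 3 ^ (3 / 10 : ℝ)) /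
          ((Gamma (1 / 5) * Gamma (8 / 15) * Gamma (13 / 15) * 3 ^ (1 / 10 : ℝ)) ^ 2 *
            (Gamma (4 / 15) * Gamma (3 / 5) * Gamma (14 / 15) * 3 ^ (3 / 10 : ℝ))) := by
        field_simp
    _ = π / sin (2 * π / 5) * (π / sin (π / 5)) ^ 2 *
          (Gamma (3 / 5) ^ 2 * Gamma (4 / 5)) * √3 /
          ((2 * π * Gamma (3 / 5)) ^ 2 * (2 * π * Gamma (4 / 5))) := by
        rw [hrefl₁, hrefl₂, htrip₁, htrip₂, three_rpow_tenth_sq_mul_three_rpow_three_tenths]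
    _ = √3 / (8 * sin (π / 5) * (sin (π / 5) * sin (2 * π / 5))) := by
        field_simp
        ring
    _ = 1 / 2 * √(3 / 5) * (1 / sin (π / 5)) := by
        rw [sin_pi_div_five_mul_sin_two_pi_div_five, sqrt_div' _ (by norm_num : (0 : ℝ) ≤ 5)]
        field_simp
        ring

/-- Example 6.4.9. Exact evaluation of the Gamma-value of the equation
`x₉·x₁₂/(x₈·x₁₃)` for the Mumford–Tate group of the Jacobian of `y² = x¹⁵ + 1`:
`Γ(9/15)²·Γ(12/15)³·Γ(6/15) / (Γ(8/15)²·Γ(14/15)·Γ(13/15)²·Γ(4/15))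
  = (1/2)·√(3/5)·(1/sin(3π/15))`. -/
theorem gamma_value_x9x12_x8x13 :
    Complex.Gamma (9 / 15) ^ 2 * Complex.Gamma (12 / 15) ^ 3 * Complex.Gamma (6 / 15) /
        (Complex.Gamma (8 / 15) ^ 2 * Complex.Gamma (14 / 15) *
          Complex.Gamma (13 / 15) ^ 2 * Complex.Gamma (4 / 15))
      = (((1 / 2 : ℝ) * Real.sqrt (3 / 5) * (1 / Real.sin (3 * Real.pi / 15)) : ℝ) : ℂ) := by
  rw [← gamma_value_x9x12_x8x13_real]
  push_cast [← Complex.Gamma_ofReal]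
  rfl
end
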